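/- arXiv:1903.01432 — 9 statements merged into one kernel-verified Lean document; each statement's English description precedes it below -/
import Mathlib

section
/- For every natural number m ≥ 1 and every x in [0,1], the Bernstein polynomial of degree m of the function h(x) = -x·log x satisfies -(1-x)/m ≤ B_m(h,x) - h(x) ≤ 0. -/
open Real


lemma wsum (x : ℝ) (n : ℕ) :
    ∑ k ∈ Finset.range (n + 1), (n.choose k : ℝ) * x ^ k * (1 - x) ^ (n - k) = 1 := by
  have h : (∑ k ∈ Finset.range (n + 1), (n.choose k : ℝ) * x ^ k * (1 - x) ^ (n - k))
      = (x + (1 - x)) ^ n := by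
    rw [add_pow]
    exact Finset.sum_congr rfl fun k hk => by ring
  rw [h]
  norm_num

lemma reindex (x : ℝ) (n : ℕ) (g : ℕ → ℝ) :
    ∑ j ∈ Finset.range (n + 2),
      (j : ℝ) * ((n + 1).choose j : ℝ) * x ^ j * (1 - x) ^ (n + 1 - j) * g j
    = (n + 1 : ℝ) * x *
      ∑ k ∈ Finset.range (n + 1), (n.choose k : ℝ) * x ^ k * (1 - x) ^ (n - k) * g (k + 1) := by
  rw [Finset.sum_range_succ' _ (n + 1)]
  simp only [Nat.cast_zero, zero_mul, mul_zero, add_zero, Finset.mul_sum]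
  refine Finset.sum_congr rfl fun k hk => ?_
  have hc : ((k : ℝ) + 1) * ((n + 1).choose (k + 1) : ℝ) = (n + 1 : ℝ) * (n.choose k : ℝ) := by
    have := Nat.add_one_mul_choose_eq n k
    have : ((n + 1 : ℕ) * n.choose k : ℝ) = (((n + 1).choose (k + 1) * (k + 1) : ℕ) : ℝ) := by
      exact_mod_cast congrArg (Nat.cast : ℕ → ℝ) this
    push_cast at this
    linarith
  have hsub : n + 1 - (k + 1) = n - k := by omega
  rw [hsub]
  push_cast
  linear_combination (x ^ (k + 1) * (1 - x) ^ (n - k) * g (k + 1)) * hc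

lemma meansum (x : ℝ) (n : ℕ) :
    ∑ k ∈ Finset.range (n + 1), (k : ℝ) * (n.choose k : ℝ) * x ^ k * (1 - x) ^ (n - k)
      = n * x := by
  cases n with
  | zero => simp
  | succ n =>
    have h := reindex x n (fun _ => 1)
    simp only [mul_one] at h
    rw [show n + 1 + 1 = n + 2 from rfl, h, wsum x n]
    push_cast
    ring

/-- Bernstein polynomial of `h(x) = -x log x`:
`B_m(h,x) = ∑_{j=0}^m h(j/m) C(m,j) x^j (1-x)^{m-j}`. -/
noncomputable def bernsteinH (m : ℕ) (x : ℝ) : ℝ :=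
  ∑ j ∈ Finset.range (m + 1),
    (-((j : ℝ) / m) * Real.log ((j : ℝ) / m)) * (m.choose j : ℝ) * x ^ j * (1 - x) ^ (m - j)

theorem stmt_0 (m : ℕ) (hm : 1 ≤ m) (x : ℝ) (hx : x ∈ Set.Icc (0 : ℝ) 1) :
    -(1 - x) / m ≤ bernsteinH m x - (-x * Real.log x) ∧
      bernsteinH m x - (-x * Real.log x) ≤ 0 := by
  obtain ⟨hx0, hx1⟩ := hx
  obtain ⟨n, rfl⟩ : ∃ n, m = n + 1 := ⟨m - 1, by omega⟩
  set M : ℝ := (n : ℝ) + 1 with hM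
  have hMpos : (0 : ℝ) < M := by positivity
  have hMne : M ≠ 0 := ne_of_gt hMpos
  -- the identity B = -x * S
  have hB : bernsteinH (n + 1) x
      = -x * ∑ k ∈ Finset.range (n + 1),
          (n.choose k : ℝ) * x ^ k * (1 - x) ^ (n - k) * Real.log (((k : ℝ) + 1) / M) := by
    unfold bernsteinH
    have h1 : ∀ j ∈ Finset.range (n + 1 + 1),
        (-((j : ℝ) / (↑(n + 1))) * Real.log ((j : ℝ) / (↑(n + 1)))) * ((n + 1).choose j : ℝ)
            * x ^ j * (1 - x) ^ (n + 1 - j)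
        = (j : ℝ) * ((n + 1).choose j : ℝ) * x ^ j * (1 - x) ^ (n + 1 - j)
            * (-(1 / M) * Real.log ((j : ℝ) / M)) := by
      intro j _
      push_cast
      ring
    rw [Finset.sum_congr rfl h1]
    rw [show n + 1 + 1 = n + 2 from rfl,
      reindex x n (fun j => -(1 / M) * Real.log ((j : ℝ) / M))]
    rw [Finset.mul_sum, Finset.mul_sum]
    refine Finset.sum_congr rfl fun k hk => ?_
    push_cast
    rw [← hM]
    field_simp
  set W : ℕ → ℝ := fun k => (n.choose k : ℝ) * x ^ k * (1 - x) ^ (n - k) with hWdef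
  have hWnn : ∀ k ∈ Finset.range (n + 1), 0 ≤ W k := by
    intro k _
    have : (0:ℝ) ≤ 1 - x := by linarith
    positivity
  have hW1 : ∑ k ∈ Finset.range (n + 1), W k = 1 := wsum x n
  set S : ℝ := ∑ k ∈ Finset.range (n + 1), W k * Real.log (((k : ℝ) + 1) / M) with hSdef
  -- mean of (k+1)/M
  have hmean : ∑ k ∈ Finset.range (n + 1), W k * (((k : ℝ) + 1) / M)
      = ((n : ℝ) * x + 1) / M := by
    have e1 : ∀ k ∈ Finset.range (n + 1),
        W k * (((k : ℝ) + 1) / M)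
        = ((k : ℝ) * (n.choose k : ℝ) * x ^ k * (1 - x) ^ (n - k)) * (1 / M)
          + ((n.choose k : ℝ) * x ^ k * (1 - x) ^ (n - k)) * (1 / M) := by
      intro k _
      simp only [hWdef]
      field_simp
    rw [Finset.sum_congr rfl e1, Finset.sum_add_distrib, ← Finset.sum_mul, ← Finset.sum_mul,
      meansum x n, wsum x n]
    field_simp
  set A : ℝ := ((n : ℝ) * x + 1) / M with hAdef
  have hApos : 0 < A := by
    have : 0 ≤ (n : ℝ) * x := by positivity
    rw [hAdef]; positivity
  -- Jensen for log
  have hJ : S ≤ Real.log A := by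
    have := (strictConcaveOn_log_Ioi.concaveOn).le_map_sum (t := Finset.range (n + 1))
      (w := W) (p := fun k => ((k : ℝ) + 1) / M) hWnn hW1
      (fun k _ => by
        simp only [Set.mem_Ioi]
        positivity)
    simp only [smul_eq_mul] at this
    rw [hSdef, ← hmean]
    exact this
  -- upper bound via Jensen for negMulLog
  have hupper : bernsteinH (n + 1) x ≤ -x * Real.log x := by
    have hVnn : ∀ j ∈ Finset.range (n + 2), 0 ≤ ((n + 1).choose j : ℝ) * x ^ j * (1 - x) ^ (n + 1 - j) := by
      intro j _
      have : (0:ℝ) ≤ 1 - x := by linarith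
      positivity
    have hV1 : ∑ j ∈ Finset.range (n + 2), ((n + 1).choose j : ℝ) * x ^ j * (1 - x) ^ (n + 1 - j) = 1 :=
      wsum x (n + 1)
    have hVmean : ∑ j ∈ Finset.range (n + 2),
        (((n + 1).choose j : ℝ) * x ^ j * (1 - x) ^ (n + 1 - j)) * ((j : ℝ) / M) = x := by
      have e1 : ∀ j ∈ Finset.range (n + 2),
          (((n + 1).choose j : ℝ) * x ^ j * (1 - x) ^ (n + 1 - j)) * ((j : ℝ) / M)
          = ((j : ℝ) * ((n + 1).choose j : ℝ) * x ^ j * (1 - x) ^ (n + 1 - j)) * (1 / M) := by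
        intro j _; ring
      rw [Finset.sum_congr rfl e1, ← Finset.sum_mul, meansum x (n + 1)]
      push_cast
      rw [← hM]
      field_simp
    have hjen := Real.concaveOn_negMulLog.le_map_sum (t := Finset.range (n + 2))
      (w := fun j => ((n + 1).choose j : ℝ) * x ^ j * (1 - x) ^ (n + 1 - j))
      (p := fun j => (j : ℝ) / M) hVnn hV1
      (fun j _ => by
        simp only [Set.mem_Ici]
        positivity)
    simp only [smul_eq_mul] at hjen
    rw [hVmean] at hjen
    have hBeq : bernsteinH (n + 1) x = ∑ j ∈ Finset.range (n + 2),
        (((n + 1).choose j : ℝ) * x ^ j * (1 - x) ^ (n + 1 - j)) * Real.negMulLog ((j : ℝ) / M) := by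
      unfold bernsteinH
      refine Finset.sum_congr rfl fun j _ => ?_
      rw [Real.negMulLog]
      push_cast
      rw [← hM]
      ring
    rw [hBeq, Real.negMulLog] at *
    linarith [hjen]
  refine ⟨?_, by linarith⟩
  -- lower bound
  rcases eq_or_lt_of_le hx0 with hx0' | hxpos
  · rw [hB, ← hx0']
    norm_num
    rw [neg_div, neg_nonpos]
    positivity
  · have hfull : S ≤ Real.log x + (1 - x) / (M * x) := by
      have hdiv : 0 < A / x := div_pos hApos hxpos
      have h1 := Real.log_le_sub_one_of_pos hdiv
      rw [Real.log_div (ne_of_gt hApos) (ne_of_gt hxpos)] at h1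
      have h2 : A / x - 1 = (1 - x) / (M * x) := by
        rw [hAdef]
        field_simp
        ring
      linarith
    have h1 : -x * (Real.log x + (1 - x) / (M * x)) ≤ -x * S :=
      mul_le_mul_of_nonpos_left hfull (by linarith)
    have h2 : -x * (Real.log x + (1 - x) / (M * x)) = -x * Real.log x - (1 - x) / M := by
      field_simp
      ring
    rw [hB]
    push_cast
    rw [← hM, neg_div]
    linarith
end

section
/- For every integer t ≥ 0, letting u(t) = (t+2)·log(t+2) + t·log t - 2(t+1)·log(t+1) (with 0·log 0 = 0), we have 1/(t+1) ≤ u(t) ≤ log 4 / (t+1). -/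
/-!
With `f x = x log x` and `a = t + 1`, `u(t) = f (a + 1) - 2 f a + f (a - 1)`. Combining the
series of `log (1 - a⁻²)` and `log ((1 + a⁻¹) / (1 - a⁻¹))` gives, for `a > 1`,
`a u = ∑ₖ a^(-2k) / ((k + 1)(2k + 1))`, a series with positive terms and first term `1`.
Hence `1 ≤ a u`, and `a u` decreases in `a`, so for `t ≥ 1` it is at most its value
`2 (3 log 3 - 4 log 2) ≤ log 4` at `a = 2` (as `3³ ≤ 2⁵`). The case `t = 0` is `1 ≤ log 4`.
-/

open Real Set

theorem hasSum_log_one_sub_sq_div_sq_add_log_div {x : ℝ} (hx0 : x ≠ 0) (hx1 : |x| < 1) :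
    HasSum (fun k : ℕ => (x ^ 2) ^ k / ((k + 1) * (2 * k + 1)))
      (log (1 - x ^ 2) / x ^ 2 + (log (1 + x) - log (1 - x)) / x) := by
  have hsq : |x ^ 2| < 1 := by rw [abs_pow]; exact pow_lt_one₀ (abs_nonneg x) hx1 two_ne_zero
  have hlog := ((hasSum_pow_div_log_of_abs_lt_one hsq).div_const (x ^ 2)).neg
  have hodd := (hasSum_log_sub_log_of_abs_lt_one hx1).div_const x
  rw [neg_div, neg_neg] at hlog
  refine (hlog.add hodd).congr_fun fun k => ?_
  field_simp
  ring

noncomputable def secondDiffXLogX (a : ℝ) : ℝ :=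
  (a + 1) * log (a + 1) - 2 * (a * log a) + (a - 1) * log (a - 1)

theorem mul_secondDiffXLogX_eq {a : ℝ} (ha : 1 < a) :
    a * secondDiffXLogX a =
      log (1 - a⁻¹ ^ 2) / a⁻¹ ^ 2 + (log (1 + a⁻¹) - log (1 - a⁻¹)) / a⁻¹ := by
  have ha0 : a ≠ 0 := by positivity
  have hplus : log (1 + a⁻¹) = log (a + 1) - log a := by
    rw [← log_div (by positivity) ha0]; congr 1; field_simp
  have hminus : log (1 - a⁻¹) = log (a - 1) - log a := by
    rw [← log_div (by linarith) ha0]; congr 1; field_simp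
  have hsq : log (1 - a⁻¹ ^ 2) = log (1 + a⁻¹) + log (1 - a⁻¹) := by
    rw [← log_mul (by positivity) (by linarith [inv_lt_one_of_one_lt₀ ha])]; ring_nf
  rw [hsq, hplus, hminus, secondDiffXLogX]
  field_simp
  ring

theorem hasSum_mul_secondDiffXLogX {a : ℝ} (ha : 1 < a) :
    HasSum (fun k : ℕ => (a ^ 2)⁻¹ ^ k / ((k + 1) * (2 * k + 1))) (a * secondDiffXLogX a) := by
  have hinv : |a⁻¹| < 1 := by
    rw [abs_inv, abs_of_pos (by linarith)]; exact inv_lt_one_of_one_lt₀ ha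
  rw [mul_secondDiffXLogX_eq ha, ← inv_pow]
  exact hasSum_log_one_sub_sq_div_sq_add_log_div (by positivity) hinv

theorem one_le_mul_secondDiffXLogX {a : ℝ} (ha : 1 < a) : 1 ≤ a * secondDiffXLogX a := by
  simpa using le_hasSum (hasSum_mul_secondDiffXLogX ha) 0 fun k _ => by positivity

theorem antitoneOn_mul_secondDiffXLogX :
    AntitoneOn (fun a => a * secondDiffXLogX a) (Ioi 1) := by
  intro b hb a ha hba
  refine hasSum_le (fun k => ?_) (hasSum_mul_secondDiffXLogX ha) (hasSum_mul_secondDiffXLogX hb)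
  have : 0 < b := by linarith [mem_Ioi.mp hb]
  gcongr

theorem two_mul_secondDiffXLogX_two_le_log_four : 2 * secondDiffXLogX 2 ≤ log 4 := by
  have h : 3 * log 3 ≤ 5 * log 2 := by
    have hlog := log_le_log (by norm_num) (show (3 : ℝ) ^ 3 ≤ 2 ^ 5 by norm_num)
    rw [log_pow, log_pow] at hlog
    exact_mod_cast hlog
  norm_num [secondDiffXLogX, log_four_eq]
  linarith

theorem stmt_2 (t : ℕ) :
    (1 : ℝ) / (t + 1) ≤
        ((t : ℝ) + 2) * Real.log ((t : ℝ) + 2) + (t : ℝ) * Real.log (t : ℝ) -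
          2 * ((t : ℝ) + 1) * Real.log ((t : ℝ) + 1) ∧
      ((t : ℝ) + 2) * Real.log ((t : ℝ) + 2) + (t : ℝ) * Real.log (t : ℝ) -
          2 * ((t : ℝ) + 1) * Real.log ((t : ℝ) + 1) ≤ Real.log 4 / (t + 1) := by
  rcases Nat.eq_zero_or_pos t with rfl | ht
  · norm_num [log_four_eq]
    linarith [log_two_gt_d9]
  set a : ℝ := t + 1 with ha_def
  have ha : 2 ≤ a := by rw [ha_def]; exact_mod_cast Nat.succ_le_succ ht
  have hu : ((t : ℝ) + 2) * log ((t : ℝ) + 2) + (t : ℝ) * log (t : ℝ) -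
      2 * a * log a = secondDiffXLogX a := by
    rw [secondDiffXLogX, ha_def, add_sub_cancel_right, add_assoc, one_add_one_eq_two]; ring
  rw [hu, div_le_iff₀' (by positivity), le_div_iff₀' (by positivity)]
  exact ⟨one_le_mul_secondDiffXLogX (by linarith),
    (antitoneOn_mul_secondDiffXLogX (by norm_num : (2:ℝ) ∈ Ioi 1) (mem_Ioi.mpr (by linarith)) ha).trans
      two_mul_secondDiffXLogX_two_le_log_four⟩
end

section
/- Define f₁(z) = -e^{-z} · Σ_{j=1}^∞ (z^j/j!) · j·log j and h(z) = -z·log z. Then for all z > 0, 0 ≤ f₁''(z)/h''(z) ≤ log 4, i.e., 0 ≤ -z·f₁''(z) ≤ log 4. -/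
/-!
Write `P b z = e^{-z} ∑ z^j/j! b_j` for the mean of `b` under the Poisson law of parameter `z`,
so that `f₁ = -P a` with `a_j = j log j`. Differentiating `P b` termwise gives `P (Δb)`, where
`Δb_j = b_{j+1} - b_j`; hence `-z f₁''(z) = z P u (z)` with `u = Δ²a`. Convexity of `x log x`
gives `u ≥ 0`, and `log y ≤ y - 1` gives `(j+1) u_j ≤ (j+2)/(j+1) ≤ log 4` for `j ≥ 2`
(`j = 0, 1` are checked directly). Since `z · z^j/j! = (j+1) z^{j+1}/(j+1)!`, this yields
`z P u (z) ≤ log 4 · e^{-z} ∑ z^{j+1}/(j+1)! ≤ log 4`.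
-/

/-- `f₁(z) = -e^{-z} ∑_{j≥1} (z^j/j!) j log j` (the `j = 0` term vanishes). -/
noncomputable def fOne (z : ℝ) : ℝ :=
  -(Real.exp (-z) * ∑' j : ℕ, z ^ j / (j.factorial : ℝ) * ((j : ℝ) * Real.log (j : ℝ)))

open Real fwdDiff

noncomputable def poissonMean (b : ℕ → ℝ) (z : ℝ) : ℝ :=
  exp (-z) * ∑' j : ℕ, z ^ j / (j.factorial : ℝ) * b j

def ExpGrowth (b : ℕ → ℝ) : Prop :=
  ∃ C r : ℝ, ∀ j, |b j| ≤ C * r ^ j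

namespace ExpGrowth

variable {b : ℕ → ℝ}

lemma fwdDiff (hb : ExpGrowth b) : ExpGrowth (Δ_[1] b) := by
  obtain ⟨C, r, hbound⟩ := hb
  refine ⟨C * (r + 1), r, fun j => ?_⟩
  calc |b (j + 1) - b j| ≤ |b (j + 1)| + |b j| := abs_sub _ _
    _ ≤ C * r ^ (j + 1) + C * r ^ j := add_le_add (hbound _) (hbound _)
    _ = C * (r + 1) * r ^ j := by ring

lemma summable_pow_div_factorial_mul (hb : ExpGrowth b) (x : ℝ) :
    Summable fun j : ℕ => x ^ j / (j.factorial : ℝ) * b j := by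
  obtain ⟨C, r, hbound⟩ := hb
  refine .of_norm_bounded ((summable_pow_div_factorial (r * |x|)).mul_left C) fun j => ?_
  rw [norm_mul, norm_div, norm_pow, norm_eq_abs, norm_eq_abs, Nat.abs_cast, mul_pow]
  calc |x| ^ j / (j.factorial : ℝ) * |b j| ≤ |x| ^ j / (j.factorial : ℝ) * (C * r ^ j) := by
        gcongr
        exact hbound j
    _ = C * (r ^ j * |x| ^ j / (j.factorial : ℝ)) := by ring

lemma hasDerivAt_tsum_pow_div_factorial_mul (hb : ExpGrowth b) (z : ℝ) :
    HasDerivAt (fun x => ∑' j : ℕ, x ^ j / (j.factorial : ℝ) * b j)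
      (∑' j : ℕ, z ^ j / (j.factorial : ℝ) * b (j + 1)) z := by
  obtain ⟨C, r, hbound⟩ := id hb
  set R := |z| + 1
  have hR : 1 ≤ R := by simp [R]
  have hzR : z ∈ Metric.ball (0 : ℝ) R := by simp [R]
  have hderiv_le : ∀ (n : ℕ), ∀ y ∈ Metric.ball (0 : ℝ) R,
      ‖(n : ℝ) * y ^ (n - 1) / (n.factorial : ℝ) * b n‖
        ≤ C * (2 * R * r) ^ n / (n.factorial : ℝ) := by
    intro n y hy
    have hyR : |y| ≤ R := (mem_ball_zero_iff.mp hy).le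
    have hn : (n : ℝ) ≤ 2 ^ n := by exact_mod_cast (Nat.lt_two_pow_self).le
    rw [norm_mul, norm_div, norm_mul, norm_pow, norm_eq_abs, norm_eq_abs, norm_eq_abs,
      Nat.abs_cast, Nat.abs_cast]
    calc (n : ℝ) * |y| ^ (n - 1) / (n.factorial : ℝ) * |b n|
        ≤ 2 ^ n * R ^ n / (n.factorial : ℝ) * (C * r ^ n) := by
          gcongr
          · exact (pow_le_pow_left₀ (abs_nonneg y) hyR _).trans
              (pow_le_pow_right₀ hR (Nat.sub_le n 1))
          · exact hbound n
      _ = C * (2 * R * r) ^ n / (n.factorial : ℝ) := by rw [mul_pow, mul_pow]; ring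
  have hu : Summable fun n : ℕ => C * (2 * R * r) ^ n / (n.factorial : ℝ) := by
    simpa only [mul_div_assoc] using (summable_pow_div_factorial _).mul_left C
  have hmain := hasDerivAt_tsum_of_isPreconnected hu Metric.isOpen_ball
    (convex_ball (0 : ℝ) R).isPreconnected
    (fun n y _ => ((hasDerivAt_pow n y).div_const _).mul_const (b n)) hderiv_le
    (Metric.mem_ball_self (by linarith)) (hb.summable_pow_div_factorial_mul 0) hzR
  refine hmain.congr_deriv ?_
  rw [Summable.tsum_eq_zero_add (.of_norm_bounded hu fun n => hderiv_le n z hzR)]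
  simp only [CharP.cast_eq_zero, zero_mul, zero_div, zero_add, Nat.add_sub_cancel,
    Nat.factorial_succ, Nat.cast_mul]
  congr 1 with n
  field_simp

end ExpGrowth

lemma hasDerivAt_poissonMean {b : ℕ → ℝ} (hb : ExpGrowth b) (z : ℝ) :
    HasDerivAt (poissonMean b) (poissonMean (Δ_[1] b) z) z := by
  have hexp : HasDerivAt (fun x => exp (-x)) (-exp (-z)) z := by
    simpa using (hasDerivAt_neg z).exp
  refine (hexp.mul (hb.hasDerivAt_tsum_pow_div_factorial_mul z)).congr_deriv ?_
  have hshift : ∑' j : ℕ, z ^ j / (j.factorial : ℝ) * b (j + 1)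
      = ∑' j : ℕ, z ^ j / (j.factorial : ℝ) * Δ_[1] b j
        + ∑' j : ℕ, z ^ j / (j.factorial : ℝ) * b j := by
    rw [← (hb.fwdDiff.summable_pow_div_factorial_mul z).tsum_add (hb.summable_pow_div_factorial_mul z)]
    congr 1 with j
    rw [fwdDiff]
    ring
  rw [hshift, poissonMean]
  ring

lemma deriv_poissonMean {b : ℕ → ℝ} (hb : ExpGrowth b) :
    deriv (poissonMean b) = poissonMean (Δ_[1] b) :=
  funext fun z => (hasDerivAt_poissonMean hb z).deriv

lemma poissonMean_nonneg {b : ℕ → ℝ} (hb : ∀ j, 0 ≤ b j) {z : ℝ} (hz : 0 ≤ z) :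
    0 ≤ poissonMean b z :=
  mul_nonneg (exp_pos _).le (tsum_nonneg fun j => mul_nonneg (by positivity) (hb j))

lemma mul_poissonMean_le {b : ℕ → ℝ} {M z : ℝ} (hb : ExpGrowth b) (hM : 0 ≤ M)
    (hbM : ∀ j : ℕ, ((j : ℝ) + 1) * b j ≤ M) (hz : 0 ≤ z) :
    z * poissonMean b z ≤ M := by
  have hexp : HasSum (fun j : ℕ => z ^ j / (j.factorial : ℝ)) (exp z) := by
    simpa only [exp_eq_exp_ℝ] using NormedSpace.expSeries_div_hasSum_exp z
  have hterm : ∀ j : ℕ, z * (z ^ j / (j.factorial : ℝ) * b j)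
      ≤ M * (z ^ (j + 1) / ((j + 1).factorial : ℝ)) := fun j => by
    have hfac : z * (z ^ j / (j.factorial : ℝ))
        = z ^ (j + 1) / ((j + 1).factorial : ℝ) * (j + 1) := by
      rw [Nat.factorial_succ, pow_succ]
      push_cast
      field_simp
    calc z * (z ^ j / (j.factorial : ℝ) * b j)
        = z ^ (j + 1) / ((j + 1).factorial : ℝ) * (((j : ℝ) + 1) * b j) := by
          rw [← mul_assoc, hfac, mul_assoc]
      _ ≤ z ^ (j + 1) / ((j + 1).factorial : ℝ) * M := by gcongr; exact hbM j
      _ = M * (z ^ (j + 1) / ((j + 1).factorial : ℝ)) := mul_comm _ _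
  have htail_summable : Summable fun j : ℕ => z ^ (j + 1) / ((j + 1).factorial : ℝ) :=
    (summable_nat_add_iff 1).mpr hexp.summable
  have htail : ∑' j : ℕ, z ^ (j + 1) / ((j + 1).factorial : ℝ) ≤ exp z :=
    hexp.tsum_eq ▸ tsum_comp_le_tsum_of_inj hexp.summable (fun j => by positivity)
      Nat.succ_injective
  calc z * poissonMean b z
      = exp (-z) * ∑' j : ℕ, z * (z ^ j / (j.factorial : ℝ) * b j) := by
        rw [poissonMean, tsum_mul_left]
        ring
    _ ≤ exp (-z) * (M * exp z) := by
        gcongr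
        calc ∑' j : ℕ, z * (z ^ j / (j.factorial : ℝ) * b j)
            ≤ ∑' j : ℕ, M * (z ^ (j + 1) / ((j + 1).factorial : ℝ)) :=
              Summable.tsum_le_tsum hterm ((hb.summable_pow_div_factorial_mul z).mul_left z)
                (htail_summable.mul_left M)
          _ ≤ M * exp z := by rw [tsum_mul_left]; gcongr
    _ = M := by rw [exp_neg]; field_simp

lemma fwdDiff_fwdDiff_apply {R : Type*} [CommRing R] (f : ℕ → R) (n : ℕ) :
    Δ_[1] (Δ_[1] f) n = f (n + 2) - 2 * f (n + 1) + f n := by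
  simp only [fwdDiff]
  ring

lemma mul_log_second_diff_nonneg {t : ℝ} (ht : 0 ≤ t) :
    0 ≤ (t + 2) * log (t + 2) - 2 * ((t + 1) * log (t + 1)) + t * log t := by
  have h := convexOn_mul_log.2 (Set.mem_Ici.mpr ht) (Set.mem_Ici.mpr (by linarith : 0 ≤ t + 2))
    (by norm_num : (0 : ℝ) ≤ 1 / 2) (by norm_num : (0 : ℝ) ≤ 1 / 2) (by norm_num)
  simp only [smul_eq_mul] at h
  rw [show 1 / 2 * t + 1 / 2 * (t + 2) = t + 1 by ring] at h
  linarith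

lemma mul_log_second_diff_le {t : ℝ} (ht : 0 < t) :
    (t + 2) * log (t + 2) - 2 * ((t + 1) * log (t + 1)) + t * log t ≤ (t + 2) / (t + 1) ^ 2 := by
  have h1 : log (t + 2) - log (t + 1) ≤ 1 / (t + 1) := by
    rw [← log_div (by positivity) (by positivity)]
    exact (log_le_sub_one_of_pos (by positivity)).trans_eq (by field_simp; ring)
  have h2 : log t + log (t + 2) - 2 * log (t + 1) ≤ -1 / (t + 1) ^ 2 := by
    rw [show 2 * log (t + 1) = log ((t + 1) ^ 2) by rw [log_pow]; norm_num,
      ← log_mul ht.ne' (by positivity), ← log_div (by positivity) (by positivity)]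
    exact (log_le_sub_one_of_pos (by positivity)).trans_eq (by field_simp; ring)
  have h2' := mul_le_mul_of_nonneg_left h2 ht.le
  have hrhs : (t + 2) / (t + 1) ^ 2 = 2 * (1 / (t + 1)) + t * (-1 / (t + 1) ^ 2) := by
    field_simp; ring
  rw [hrhs]
  linarith

lemma succ_mul_fwdDiff_fwdDiff_mul_log_le (n : ℕ) :
    ((n : ℝ) + 1) * Δ_[1] (Δ_[1] fun j : ℕ => (j : ℝ) * log j) n ≤ log 4 := by
  have hlog4 : log 4 = 2 * log 2 := by
    rw [show (4 : ℝ) = 2 ^ 2 by norm_num, log_pow, Nat.cast_ofNat]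
  rw [fwdDiff_fwdDiff_apply]
  push_cast
  match n with
  | 0 => norm_num [hlog4]
  | 1 =>
    have h : log (3 ^ 3) ≤ log (2 ^ 5) := log_le_log (by norm_num) (by norm_num)
    rw [log_pow, log_pow] at h
    norm_num [hlog4] at h ⊢
    linarith
  | n + 2 =>
    push_cast
    set t : ℝ := n + 2
    have ht : 2 ≤ t := by simp [t]
    calc (t + 1) * ((t + 2) * log (t + 2) - 2 * ((t + 1) * log (t + 1)) + t * log t)
        ≤ (t + 1) * ((t + 2) / (t + 1) ^ 2) := by
          gcongr
          exact mul_log_second_diff_le (by linarith)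
      _ = (t + 2) / (t + 1) := by field_simp
      _ ≤ 4 / 3 := by rw [div_le_div_iff₀ (by positivity) (by norm_num)]; linarith
      _ ≤ log 4 := by linarith [log_two_gt_d9]

lemma fwdDiff_fwdDiff_mul_log_nonneg (n : ℕ) :
    0 ≤ Δ_[1] (Δ_[1] fun j : ℕ => (j : ℝ) * log j) n := by
  rw [fwdDiff_fwdDiff_apply]
  push_cast
  exact mul_log_second_diff_nonneg n.cast_nonneg

lemma expGrowth_mul_log : ExpGrowth fun j : ℕ => (j : ℝ) * log j := by
  refine ⟨1, 4, fun j => ?_⟩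
  have hj : (j : ℝ) ≤ 2 ^ j := by exact_mod_cast Nat.lt_two_pow_self.le
  rw [abs_of_nonneg (mul_nonneg j.cast_nonneg (log_natCast_nonneg j)), one_mul,
    show (4 : ℝ) = 2 * 2 by norm_num, mul_pow]
  exact mul_le_mul hj ((log_le_self j.cast_nonneg).trans hj) (log_natCast_nonneg j) (by positivity)

lemma fOne_eq_neg_poissonMean : fOne = -poissonMean fun j : ℕ => (j : ℝ) * log j := rfl

lemma deriv_deriv_fOne :
    deriv (deriv fOne) = -poissonMean (Δ_[1] (Δ_[1] fun j : ℕ => (j : ℝ) * log j)) := by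
  rw [fOne_eq_neg_poissonMean, deriv.neg', deriv_poissonMean expGrowth_mul_log]
  exact funext fun z => (hasDerivAt_poissonMean expGrowth_mul_log.fwdDiff z).neg.deriv

theorem stmt_5 (z : ℝ) (hz : 0 < z) :
    0 ≤ -z * deriv (deriv fOne) z ∧ -z * deriv (deriv fOne) z ≤ Real.log 4 := by
  rw [deriv_deriv_fOne, Pi.neg_apply, neg_mul_neg]
  exact ⟨mul_nonneg hz.le (poissonMean_nonneg fwdDiff_fwdDiff_mul_log_nonneg hz.le),
    mul_poissonMean_le expGrowth_mul_log.fwdDiff.fwdDiff (log_nonneg (by norm_num))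
      succ_mul_fwdDiff_fwdDiff_mul_log_le hz.le⟩
end

section
/- For every natural number m ≥ 0 and every real p ∈ [0,1], we have 0 ≤ e^{-mp} - (1-p)^m ≤ 2p. -/
theorem stmt_9 (m : ℕ) (p : ℝ) (hp : p ∈ Set.Icc (0 : ℝ) 1) :
    0 ≤ Real.exp (-(m * p)) - (1 - p) ^ m ∧ Real.exp (-(m * p)) - (1 - p) ^ m ≤ 2 * p := by
  obtain ⟨hp0, hp1⟩ := hp
  have hb : (0:ℝ) ≤ 1 - p := by linarith
  have h1 : 1 - p ≤ Real.exp (-p) := by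
    have := Real.add_one_le_exp (-p); linarith
  have hpow : ∀ n : ℕ, (1 - p) ^ n ≤ Real.exp (-(n * p)) := by
    intro n
    calc (1-p)^n ≤ (Real.exp (-p))^n := pow_le_pow_left₀ hb h1 n
      _ = Real.exp (-(n*p)) := by rw [← Real.exp_nat_mul]; ring_nf
  have hlow : 0 ≤ Real.exp (-(m * p)) - (1 - p) ^ m := by
    have := hpow m; linarith
  refine ⟨hlow, ?_⟩
  have h1p : (0:ℝ) < 1 + p := by linarith
  have hc : Real.exp (-p) - (1 - p) ≤ p^2 / (1 + p) := by
    have he : Real.exp (-p) ≤ 1 / (1 + p) := by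
      rw [Real.exp_neg]
      have h2 : 1 + p ≤ Real.exp p := by have := Real.add_one_le_exp p; linarith
      rw [one_div]
      exact inv_anti₀ h1p h2
    have : 1 / (1 + p) - (1 - p) = p^2 / (1 + p) := by field_simp; ring
    linarith
  have hcnn : 0 ≤ p^2 / (1 + p) := by positivity
  have key : ∀ n : ℕ, Real.exp (-(n*p)) - (1-p)^n
      ≤ p^2/(1+p) * n * Real.exp p * Real.exp (-(n*p)) := by
    intro n
    induction n with
    | zero => simp
    | succ k ih =>
      have hsplit : Real.exp (-((k+1:ℕ)*p)) = Real.exp (-p) * Real.exp (-((k:ℕ)*p)) := by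
        rw [← Real.exp_add]; push_cast; ring_nf
      have hEk : Real.exp (-((k:ℕ)*p)) = Real.exp p * Real.exp (-((k+1:ℕ)*p)) := by
        rw [← Real.exp_add]
        congr 1
        push_cast; ring
      have hEpos : 0 < Real.exp (-((k:ℕ)*p)) := Real.exp_pos _
      have hE1pos : 0 < Real.exp (-((k+1:ℕ)*p)) := Real.exp_pos _
      have hppos : 0 < Real.exp p := Real.exp_pos _
      have hnpos : 0 < Real.exp (-p) := Real.exp_pos _
      have hpk : (0:ℝ) ≤ (1-p)^k := pow_nonneg hb k
      have hpowk := hpow k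
      -- f(k+1) = exp(-p)*(E_k - (1-p)^k) + (exp(-p)-(1-p))*(1-p)^k
      have step1 : Real.exp (-((k+1:ℕ)*p)) - (1-p)^(k+1)
          = Real.exp (-p) * (Real.exp (-((k:ℕ)*p)) - (1-p)^k)
            + (Real.exp (-p) - (1-p)) * (1-p)^k := by
        rw [hsplit]; ring
      have step2 : Real.exp (-p) * (Real.exp (-((k:ℕ)*p)) - (1-p)^k)
          ≤ Real.exp (-p) * (p^2/(1+p) * k * Real.exp p * Real.exp (-((k:ℕ)*p))) :=
        mul_le_mul_of_nonneg_left ih (le_of_lt hnpos)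
      have step3 : (Real.exp (-p) - (1-p)) * (1-p)^k ≤ p^2/(1+p) * Real.exp (-((k:ℕ)*p)) := by
        calc (Real.exp (-p) - (1-p)) * (1-p)^k ≤ p^2/(1+p) * (1-p)^k :=
              mul_le_mul_of_nonneg_right hc hpk
          _ ≤ p^2/(1+p) * Real.exp (-((k:ℕ)*p)) :=
              mul_le_mul_of_nonneg_left hpowk hcnn
      have heq1 : Real.exp (-p) * (p^2/(1+p) * k * Real.exp p * Real.exp (-((k:ℕ)*p)))
          = p^2/(1+p) * k * Real.exp p * Real.exp (-((k+1:ℕ)*p)) := by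
        rw [hsplit]; ring
      have heq2 : p^2/(1+p) * Real.exp (-((k:ℕ)*p))
          = p^2/(1+p) * Real.exp p * Real.exp (-((k+1:ℕ)*p)) := by
        rw [hEk]; ring
      have : Real.exp (-((k+1:ℕ)*p)) - (1-p)^(k+1)
          ≤ p^2/(1+p) * k * Real.exp p * Real.exp (-((k+1:ℕ)*p))
            + p^2/(1+p) * Real.exp p * Real.exp (-((k+1:ℕ)*p)) := by
        rw [step1]; rw [heq1] at step2; rw [heq2] at step3; linarith
      calc Real.exp (-((k+1:ℕ)*p)) - (1-p)^(k+1)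
          ≤ p^2/(1+p) * k * Real.exp p * Real.exp (-((k+1:ℕ)*p))
            + p^2/(1+p) * Real.exp p * Real.exp (-((k+1:ℕ)*p)) := this
        _ = p^2/(1+p) * (k+1:ℕ) * Real.exp p * Real.exp (-((k+1:ℕ)*p)) := by push_cast; ring
  have hkey := key m
  -- now bound p^2/(1+p) * m * exp p * exp(-(m*p)) ≤ 2*p
  have hE : 0 < Real.exp (-(m*p)) := Real.exp_pos _
  have hmp0 : (0:ℝ) ≤ (m:ℝ)*p := by positivity
  have ht : (m:ℝ)*p * Real.exp (-((m:ℝ)*p)) ≤ Real.exp (-1) := by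
    have h3 : (m:ℝ)*p ≤ Real.exp ((m:ℝ)*p - 1) := by
      have := Real.add_one_le_exp ((m:ℝ)*p - 1); linarith
    calc (m:ℝ)*p * Real.exp (-((m:ℝ)*p)) ≤ Real.exp ((m:ℝ)*p - 1) * Real.exp (-((m:ℝ)*p)) :=
          mul_le_mul_of_nonneg_right h3 (le_of_lt hE)
      _ = Real.exp (-1) := by rw [← Real.exp_add]; ring_nf
  have hep1 : Real.exp (-1) * Real.exp p ≤ 1 := by
    rw [← Real.exp_add]
    exact Real.exp_le_one_iff.2 (by linarith)
  have hbound : p^2/(1+p) * m * Real.exp p * Real.exp (-(m*p)) ≤ 2*p := by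
    have hrw : p^2/(1+p) * m * Real.exp p * Real.exp (-(m*p))
        = (p/(1+p)) * (((m:ℝ)*p * Real.exp (-((m:ℝ)*p))) * Real.exp p) := by
      field_simp
    have hfrac : 0 ≤ p/(1+p) := by positivity
    have hfrac1 : p/(1+p) ≤ p := by
      rw [div_le_iff₀ h1p]; nlinarith
    have hep : 0 < Real.exp p := Real.exp_pos _
    have h4 : ((m:ℝ)*p * Real.exp (-((m:ℝ)*p))) * Real.exp p ≤ Real.exp (-1) * Real.exp p :=
      mul_le_mul_of_nonneg_right ht (le_of_lt hep)
    have h5 : ((m:ℝ)*p * Real.exp (-((m:ℝ)*p))) * Real.exp p ≤ 1 := le_trans h4 hep1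
    have h6 : 0 ≤ ((m:ℝ)*p * Real.exp (-((m:ℝ)*p))) * Real.exp p := by positivity
    calc p^2/(1+p) * m * Real.exp p * Real.exp (-(m*p))
        = (p/(1+p)) * (((m:ℝ)*p * Real.exp (-((m:ℝ)*p))) * Real.exp p) := hrw
      _ ≤ (p/(1+p)) * 1 := mul_le_mul_of_nonneg_left h5 hfrac
      _ = p/(1+p) := mul_one _
      _ ≤ p := hfrac1
      _ ≤ 2*p := by linarith
  linarith
end

section
/- For every integer j ≥ 1 and every real z ≥ 0, |e^{-z} · (z^j/j! - z^{j+1}/(j+1)!)| ≤ 1/(√(2π)·((j+1) - √(j+1))). -/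
/-!
With `M = j + 1`, the quantity is `g(z) / M!` where `g(z) = z ^ j e^{-z} (M - z)`. Since
`g'(z) = e^{-z} z^(j-1) ((z - M)^2 - M)`, `g` increases, decreases, increases with turning points
`M ∓ √M`, so `|g| ≤ z ^ j e^{-z} √M` at one of them. There `z ^ j e^{-z} = z ^ M e^{-z} / z`,
the mode bound `z ^ M e^{-z} ≤ M ^ M e^{-M}` and `z ≥ M - √M` give `|g| ≤ M ^ M e^{-M} √M / (M - √M)`,
and Stirling's lower bound `√(2πM) (M/e)^M ≤ M!` finishes.
-/

open Real Set
open scoped Nat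

lemma pow_mul_exp_neg_le (n : ℕ) {z : ℝ} (hz : 0 ≤ z) :
    z ^ n * exp (-z) ≤ (n : ℝ) ^ n * exp (-n) := by
  rcases Nat.eq_zero_or_pos n with rfl | hn
  · simpa using hz
  have hn' : (0 : ℝ) < n := by exact_mod_cast hn
  have h : (z / n) ^ n ≤ exp (z / n - 1) ^ n :=
    pow_le_pow_left₀ (by positivity) (by linarith [add_one_le_exp (z / n - 1)]) n
  rw [← exp_nat_mul, div_pow, div_le_iff₀ (by positivity)] at h
  calc z ^ n * exp (-z) ≤ exp (n * (z / n - 1)) * n ^ n * exp (-z) := by gcongr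
    _ = (n : ℝ) ^ n * exp (-n) := by
      rw [mul_comm _ ((n : ℝ) ^ n), mul_assoc, ← exp_add]
      congr 2
      field_simp
      ring

lemma sqrt_two_pi_mul_mul_pow_mul_exp_neg_le_factorial (n : ℕ) {z : ℝ} (hz : 0 ≤ z) :
    √(2 * π * n) * (z ^ n * exp (-z)) ≤ n ! :=
  calc √(2 * π * n) * (z ^ n * exp (-z)) ≤ √(2 * π * n) * ((n : ℝ) ^ n * exp (-n)) :=
        mul_le_mul_of_nonneg_left (pow_mul_exp_neg_le n hz) (sqrt_nonneg _)
    _ = √(2 * π * n) * (n / exp 1) ^ n := by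
        rw [div_pow, ← exp_nat_mul, mul_one, exp_neg, div_eq_mul_inv]
    _ ≤ n ! := Stirling.le_factorial_stirling n

/-- `(k + 2)! * d/dz (e^{-z} z^(k+2) / (k+2)!)`, the slope of a Poisson probability in its mean. -/
noncomputable def poissonSlope (k : ℕ) (z : ℝ) : ℝ := z ^ (k + 1) * exp (-z) * ((k : ℝ) + 2 - z)

section PoissonSlope

variable (k : ℕ)

lemma hasDerivAt_poissonSlope (x : ℝ) :
    HasDerivAt (poissonSlope k) (exp (-x) * x ^ k * ((x - (k + 2)) ^ 2 - (k + 2))) x := by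
  have hexp : HasDerivAt (fun y => exp (-y)) (-exp (-x)) x := by
    simpa using (hasDerivAt_neg x).exp
  refine (((hasDerivAt_pow (k + 1) x).mul hexp).mul
    ((hasDerivAt_const x ((k : ℝ) + 2)).sub (hasDerivAt_id' x))).congr_deriv ?_
  simp only [Pi.mul_apply, Pi.sub_apply, Nat.add_sub_cancel]
  push_cast
  ring

lemma continuous_poissonSlope : Continuous (poissonSlope k) := by
  unfold poissonSlope; fun_prop

lemma sqrt_lt_self_cast_add_two : √((k : ℝ) + 2) < k + 2 :=
  sqrt_lt_self_iff.mpr (by linarith [Nat.cast_nonneg (α := ℝ) k])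

lemma poissonSlope_monotoneOn_Icc :
    MonotoneOn (poissonSlope k) (Icc 0 (k + 2 - √((k : ℝ) + 2))) := by
  refine monotoneOn_of_hasDerivWithinAt_nonneg (convex_Icc _ _)
    (continuous_poissonSlope k).continuousOn
    (fun x _ => (hasDerivAt_poissonSlope k x).hasDerivWithinAt) fun x hx => ?_
  rw [interior_Icc] at hx
  have hgap : √((k : ℝ) + 2) ≤ k + 2 - x := by linarith [hx.2]
  have hsq := sq_sqrt (by positivity : (0 : ℝ) ≤ k + 2)
  have hx₀ : 0 ≤ x := hx.1.le
  exact mul_nonneg (by positivity) (by nlinarith [sqrt_nonneg ((k : ℝ) + 2)])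

lemma poissonSlope_antitoneOn_Icc :
    AntitoneOn (poissonSlope k) (Icc (k + 2 - √((k : ℝ) + 2)) (k + 2 + √((k : ℝ) + 2))) := by
  refine antitoneOn_of_hasDerivWithinAt_nonpos (convex_Icc _ _)
    (continuous_poissonSlope k).continuousOn
    (fun x _ => (hasDerivAt_poissonSlope k x).hasDerivWithinAt) fun x hx => ?_
  rw [interior_Icc] at hx
  have hx₀ : 0 ≤ x := by linarith [hx.1, sqrt_lt_self_cast_add_two k]
  have hsq := sq_sqrt (by positivity : (0 : ℝ) ≤ k + 2)
  exact mul_nonpos_of_nonneg_of_nonpos (by positivity) (by nlinarith [hx.1, hx.2])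

lemma poissonSlope_monotoneOn_Ici :
    MonotoneOn (poissonSlope k) (Ici (k + 2 + √((k : ℝ) + 2))) := by
  refine monotoneOn_of_hasDerivWithinAt_nonneg (convex_Ici _)
    (continuous_poissonSlope k).continuousOn
    (fun x _ => (hasDerivAt_poissonSlope k x).hasDerivWithinAt) fun x hx => ?_
  rw [interior_Ici] at hx
  have hgap : √((k : ℝ) + 2) ≤ x - (k + 2) := by linarith [mem_Ioi.mp hx]
  have hsq := sq_sqrt (by positivity : (0 : ℝ) ≤ k + 2)
  have hx₀ : 0 ≤ x := by linarith [sqrt_nonneg ((k : ℝ) + 2)]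
  exact mul_nonneg (by positivity) (by nlinarith [sqrt_nonneg ((k : ℝ) + 2)])

lemma poissonSlope_nonneg {z : ℝ} (hz : 0 ≤ z) (hzk : z ≤ k + 2) : 0 ≤ poissonSlope k z := by
  have : 0 ≤ (k : ℝ) + 2 - z := by linarith
  unfold poissonSlope
  positivity

lemma poissonSlope_nonpos {z : ℝ} (hkz : k + 2 ≤ z) : poissonSlope k z ≤ 0 := by
  have : 0 ≤ z := by linarith [Nat.cast_nonneg (α := ℝ) k]
  exact mul_nonpos_of_nonneg_of_nonpos (by positivity) (by linarith)

lemma poissonSlope_mem_Icc {z : ℝ} (hz : 0 ≤ z) :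
    poissonSlope k z ∈
      Icc (poissonSlope k (k + 2 + √((k : ℝ) + 2))) (poissonSlope k (k + 2 - √((k : ℝ) + 2))) := by
  have hs₀ := sqrt_nonneg ((k : ℝ) + 2)
  have hs := sqrt_lt_self_cast_add_two k
  have hk₀ : poissonSlope k (k + 2 + √((k : ℝ) + 2)) ≤ 0 := poissonSlope_nonpos k (by linarith)
  have hk₁ : 0 ≤ poissonSlope k (k + 2 - √((k : ℝ) + 2)) :=
    poissonSlope_nonneg k (by linarith) (by linarith)
  rcases le_total z (k + 2 - √((k : ℝ) + 2)) with h₀ | h₀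
  · exact ⟨hk₀.trans (poissonSlope_nonneg k hz (by linarith)),
      poissonSlope_monotoneOn_Icc k ⟨hz, h₀⟩ ⟨by linarith, le_rfl⟩ h₀⟩
  rcases le_total z (k + 2 + √((k : ℝ) + 2)) with h₁ | h₁
  · exact ⟨poissonSlope_antitoneOn_Icc k ⟨h₀, h₁⟩ ⟨by linarith, le_rfl⟩ h₁,
      poissonSlope_antitoneOn_Icc k ⟨le_rfl, by linarith⟩ ⟨h₀, h₁⟩ h₀⟩
  · exact ⟨poissonSlope_monotoneOn_Ici k self_mem_Ici h₁ h₁,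
      (poissonSlope_nonpos k (by linarith)).trans hk₁⟩

lemma pow_succ_mul_exp_neg_mul_sqrt_le {w : ℝ} (hw : k + 2 - √((k : ℝ) + 2) ≤ w) :
    w ^ (k + 1) * exp (-w) * √((k : ℝ) + 2) ≤
      (k + 2)! / (√(2 * π) * (k + 2 - √((k : ℝ) + 2))) := by
  have hs := sqrt_lt_self_cast_add_two k
  have hw₀ : 0 < w := by linarith
  have hstirling := sqrt_two_pi_mul_mul_pow_mul_exp_neg_le_factorial (k + 2) hw₀.le
  push_cast at hstirling
  rw [sqrt_mul (by positivity)] at hstirling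
  rw [le_div_iff₀ (mul_pos (by positivity) (sub_pos.mpr hs))]
  calc w ^ (k + 1) * exp (-w) * √((k : ℝ) + 2) * (√(2 * π) * (k + 2 - √((k : ℝ) + 2)))
      ≤ w ^ (k + 1) * exp (-w) * √((k : ℝ) + 2) * (√(2 * π) * w) := by gcongr
    _ = √(2 * π) * √((k : ℝ) + 2) * (w ^ (k + 2) * exp (-w)) := by ring
    _ ≤ (k + 2)! := hstirling

lemma abs_poissonSlope_le {z : ℝ} (hz : 0 ≤ z) :
    |poissonSlope k z| ≤ (k + 2)! / (√(2 * π) * (k + 2 - √((k : ℝ) + 2))) := by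
  obtain ⟨hlower, hupper⟩ := poissonSlope_mem_Icc k hz
  have hs₀ := sqrt_nonneg ((k : ℝ) + 2)
  refine abs_le.mpr ⟨le_trans ?_ hlower, hupper.trans ?_⟩
  · have hpeak := pow_succ_mul_exp_neg_mul_sqrt_le k (w := k + 2 + √((k : ℝ) + 2)) (by linarith)
    rw [poissonSlope]
    linarith
  · simpa [poissonSlope] using pow_succ_mul_exp_neg_mul_sqrt_le k le_rfl

end PoissonSlope

theorem stmt_10 (j : ℕ) (hj : 1 ≤ j) (z : ℝ) (hz : 0 ≤ z) :
    |Real.exp (-z) * (z ^ j / (j.factorial : ℝ) - z ^ (j + 1) / ((j + 1).factorial : ℝ))| ≤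
      1 / (Real.sqrt (2 * Real.pi) * (((j : ℝ) + 1) - Real.sqrt ((j : ℝ) + 1))) := by
  obtain ⟨k, rfl⟩ : ∃ k, j = k + 1 := ⟨j - 1, by omega⟩
  have hfactorial : ((k + 2)! : ℝ) = (k + 2) * (k + 1)! := by
    push_cast [Nat.factorial_succ]
    ring
  have hslope : exp (-z) * (z ^ (k + 1) / (k + 1)! - z ^ (k + 1 + 1) / (k + 1 + 1)!) =
      poissonSlope k z / (k + 2)! := by
    rw [poissonSlope, hfactorial]
    field_simp
    ring
  have hcast : ((k + 1 : ℕ) : ℝ) + 1 = k + 2 := by push_cast; ring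
  rw [hcast, hslope, abs_div, Nat.abs_cast, div_le_iff₀ (by positivity), one_div_mul_eq_div]
  exact abs_poissonSlope_le k hz
end

section
/- For every integer j ≥ 1 and every real z > 0, |e^{-z} · (z^j/j! - z^{j+1}/(j+1)!)| ≤ 5/z. -/
open Real

lemma s_exp_le_half (s : ℝ) (hs : 0 ≤ s) : s * Real.exp (-(s^2)) ≤ 1/2 := by
  have h1 : s^2 + 1 ≤ Real.exp (s^2) := Real.add_one_le_exp _
  have h2 : 2*s ≤ s^2 + 1 := by nlinarith [sq_nonneg (s-1)]
  have h3 : Real.exp (-(s^2)) = 1 / Real.exp (s^2) := by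
    rw [Real.exp_neg]; ring
  rw [h3]
  rw [mul_one_div, div_le_div_iff₀ (Real.exp_pos _) (by norm_num)]
  nlinarith

lemma ssq_exp_le_one (s : ℝ) : s^2 * Real.exp (-(s^2)) ≤ 1 := by
  have h1 : s^2 + 1 ≤ Real.exp (s^2) := Real.add_one_le_exp _
  have h3 : Real.exp (-(s^2)) = 1 / Real.exp (s^2) := by
    rw [Real.exp_neg]; ring
  rw [h3, mul_one_div, div_le_one (Real.exp_pos _)]
  nlinarith

lemma gauss_bound (m : ℕ) (hm : 1 ≤ m) (z : ℝ) (hz : 0 < z) :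
    Real.exp (-z) * z ^ m * |z - (m:ℝ)| ≤
      2 * Real.sqrt m * (((m:ℝ) / Real.exp 1) ^ m) := by
  set a := Real.sqrt z with ha
  set b := Real.sqrt m with hb
  have hmpos : (0:ℝ) < m := by exact_mod_cast Nat.pos_of_ne_zero (by omega)
  have ha2 : a ^ 2 = z := Real.sq_sqrt hz.le
  have hb2 : b ^ 2 = (m:ℝ) := Real.sq_sqrt hmpos.le
  have hapos : 0 < a := Real.sqrt_pos.mpr hz
  have hb1 : 1 ≤ b := by
    rw [hb, show (1:ℝ) = Real.sqrt 1 by simp]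
    exact Real.sqrt_le_sqrt (by exact_mod_cast hm)
  have hbpos : 0 < b := lt_of_lt_of_le one_pos hb1
  set s := |a - b| with hs
  have hs0 : 0 ≤ s := abs_nonneg _
  have hssq : s ^ 2 = (a - b)^2 := sq_abs _
  -- step 1 : exp(-z) * z^m ≤ (m/e)^m * exp(-(s^2))
  have h1 : Real.exp (-z) * z ^ m ≤ ((m:ℝ) / Real.exp 1) ^ m * Real.exp (-(s^2)) := by
    have hz_pow : z ^ m = Real.exp ((m:ℝ) * Real.log z) := by
      rw [Real.exp_nat_mul, Real.exp_log hz]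
    have hm_pow : ((m:ℝ) / Real.exp 1) ^ m = Real.exp ((m:ℝ) * (Real.log m - 1)) := by
      rw [Real.exp_nat_mul, Real.exp_sub, Real.exp_log hmpos]
    rw [hz_pow, hm_pow, ← Real.exp_add, ← Real.exp_add, Real.exp_le_exp]
    have hlogz : Real.log z = 2 * Real.log a := by
      rw [← ha2, Real.log_pow]; push_cast; ring
    have hlogm : Real.log (m:ℝ) = 2 * Real.log b := by
      rw [← hb2, Real.log_pow]; push_cast; ring
    have hlog : Real.log a - Real.log b ≤ a/b - 1 := by
      rw [← Real.log_div hapos.ne' hbpos.ne']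
      exact Real.log_le_sub_one_of_pos (by positivity)
    have hkey : (m:ℝ) * Real.log z - (m:ℝ) * Real.log m ≤ 2*b*(a-b) := by
      rw [hlogz, hlogm, ← hb2]
      have : b^2 * (a/b - 1) = b*a - b^2 := by field_simp
      nlinarith [mul_le_mul_of_nonneg_left hlog (by positivity : (0:ℝ) ≤ 2*b^2)]
    rw [hssq]
    nlinarith [hkey, ha2, hb2]
  -- step 2 : |z - m| = s * (a + b)
  have h2 : |z - (m:ℝ)| = s * (a + b) := by
    have : z - (m:ℝ) = (a - b) * (a + b) := by rw [← ha2, ← hb2]; ring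
    rw [this, abs_mul, abs_of_pos (by positivity : (0:ℝ) < a + b)]
  -- step 3 : s * (a+b) * exp(-(s^2)) ≤ 2 * b
  have h3 : s * (a + b) * Real.exp (-(s^2)) ≤ 2 * b := by
    have hab : a + b ≤ 2*b + s := by
      have := le_abs_self (a - b); linarith
    have hE : (0:ℝ) < Real.exp (-(s^2)) := Real.exp_pos _
    calc s * (a + b) * Real.exp (-(s^2))
        ≤ s * (2*b + s) * Real.exp (-(s^2)) := by
          apply mul_le_mul_of_nonneg_right _ hE.le
          exact mul_le_mul_of_nonneg_left hab hs0
      _ = 2*b * (s * Real.exp (-(s^2))) + s^2 * Real.exp (-(s^2)) := by ring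
      _ ≤ 2*b * (1/2) + 1 := by
          have := s_exp_le_half s hs0
          have := ssq_exp_le_one s
          nlinarith
      _ = b + 1 := by ring
      _ ≤ 2 * b := by linarith
  calc Real.exp (-z) * z ^ m * |z - (m:ℝ)|
      = (Real.exp (-z) * z ^ m) * (s * (a + b)) := by rw [h2]
    _ ≤ (((m:ℝ) / Real.exp 1) ^ m * Real.exp (-(s^2))) * (s * (a + b)) := by
        apply mul_le_mul_of_nonneg_right h1
        positivity
    _ = ((m:ℝ) / Real.exp 1) ^ m * (s * (a + b) * Real.exp (-(s^2))) := by ring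
    _ ≤ ((m:ℝ) / Real.exp 1) ^ m * (2 * b) := by
        apply mul_le_mul_of_nonneg_left h3
        positivity
    _ = 2 * Real.sqrt m * (((m:ℝ) / Real.exp 1) ^ m) := by rw [hb]; ring
lemma stirling_lb (m : ℕ) (hm : 1 ≤ m) :
    Real.sqrt m * ((m / Real.exp 1) ^ m) ≤ (m.factorial : ℝ) := by
  obtain ⟨n, rfl⟩ := Nat.exists_eq_add_of_le hm
  set k := 1 + n with hk
  have hpi : Real.sqrt π ≤ Stirling.stirlingSeq k := by
    have h := Stirling.stirlingSeq'_antitone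
    have ht : Filter.Tendsto (Stirling.stirlingSeq ∘ Nat.succ) Filter.atTop (nhds (Real.sqrt π)) :=
      Stirling.tendsto_stirlingSeq_sqrt_pi.comp (Filter.tendsto_add_atTop_nat 1)
    have := h.le_of_tendsto ht n
    simpa [Nat.succ_eq_add_one, Nat.add_comm n 1] using this
  have hkpos : (0:ℝ) < k := by positivity
  have hden : (0:ℝ) < Real.sqrt (2 * k) * ((k / Real.exp 1) ^ k) := by positivity
  have hdef : Stirling.stirlingSeq k = (k.factorial : ℝ) / (Real.sqrt (2 * k) * ((k / Real.exp 1) ^ k)) := rfl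
  have h1 : Real.sqrt π * (Real.sqrt (2 * k) * ((k / Real.exp 1) ^ k)) ≤ (k.factorial : ℝ) := by
    rw [hdef] at hpi
    calc Real.sqrt π * (Real.sqrt (2 * k) * ((k / Real.exp 1) ^ k))
        ≤ ((k.factorial : ℝ) / (Real.sqrt (2 * k) * ((k / Real.exp 1) ^ k))) * (Real.sqrt (2 * k) * ((k / Real.exp 1) ^ k)) := by
          apply mul_le_mul_of_nonneg_right hpi hden.le
      _ = (k.factorial : ℝ) := by field_simp
  refine le_trans ?_ h1
  have h2 : Real.sqrt (k:ℝ) ≤ Real.sqrt π * Real.sqrt (2 * k) := by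
    rw [← Real.sqrt_mul pi_pos.le]
    apply Real.sqrt_le_sqrt
    nlinarith [pi_gt_three, hkpos]
  have h3 : (0:ℝ) ≤ ((k:ℝ) / Real.exp 1) ^ k := by positivity
  nlinarith [h2, h3, mul_le_mul_of_nonneg_right h2 h3]

theorem stmt_11 (j : ℕ) (hj : 1 ≤ j) (z : ℝ) (hz : 0 < z) :
    |Real.exp (-z) * (z ^ j / (j.factorial : ℝ) - z ^ (j + 1) / ((j + 1).factorial : ℝ))| ≤
      5 / z := by
  have hmf : (0:ℝ) < ((j+1).factorial : ℝ) := by exact_mod_cast (j+1).factorial_pos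
  have hfact : ((j+1).factorial : ℝ) = ((j:ℝ)+1) * (j.factorial : ℝ) := by
    rw [Nat.factorial_succ]; push_cast; ring
  have hjf : (0:ℝ) < (j.factorial : ℝ) := by exact_mod_cast j.factorial_pos
  have habs : |Real.exp (-z) * (z ^ j / (j.factorial : ℝ) - z ^ (j + 1) / ((j + 1).factorial : ℝ))|
      = Real.exp (-z) * z ^ j * |z - ((j:ℝ)+1)| / ((j+1).factorial : ℝ) := by
    have hsub : z ^ j / (j.factorial:ℝ) - z^(j+1)/((j+1).factorial:ℝ)
        = z^j * (((j:ℝ)+1) - z) / ((j+1).factorial:ℝ) := by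
      rw [hfact]; field_simp; ring
    rw [hsub, abs_mul, abs_div, abs_of_pos (Real.exp_pos _), abs_mul,
      abs_of_pos (pow_pos hz j), abs_of_pos hmf, abs_sub_comm]
    ring
  rw [habs, div_le_div_iff₀ hmf hz]
  have key : Real.exp (-z) * z ^ (j+1) * |z - (((j+1:ℕ)):ℝ)| ≤ 5 * ((j+1).factorial : ℝ) := by
    calc Real.exp (-z) * z ^ (j+1) * |z - (((j+1:ℕ)):ℝ)|
        ≤ 2 * Real.sqrt (j+1:ℕ) * ((((j+1:ℕ)):ℝ) / Real.exp 1) ^ (j+1) :=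
          gauss_bound (j+1) (by omega) z hz
      _ ≤ 2 * ((j+1).factorial : ℝ) := by
          have := stirling_lb (j+1) (by omega)
          nlinarith [this]
      _ ≤ 5 * ((j+1).factorial : ℝ) := by linarith
  calc Real.exp (-z) * z ^ j * |z - ((j:ℝ)+1)| * z
      = Real.exp (-z) * z ^ (j+1) * |z - (((j+1:ℕ)):ℝ)| := by
        push_cast; ring
    _ ≤ 5 * ((j+1).factorial : ℝ) := key
end

section
/- For all reals y ≥ 0 and r ≥ 0, |Σ_{j=1}^∞ ((-y)^j / j!) · P(Poisson(r) < j)| ≤ e^{-r}·(1 - e^{-y}). -/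
/-!
Exchanging the order of summation turns the series into
`e^{-r} ∑_l r^l/l! · (e^{-y} - ∑_{k ≤ l} (-y)^k/k!)`, and repeated integration by parts writes
each tail of the exponential series as `(-1)^{l+1}/l! · ∫₀^y (y-u)^l e^{-u} du`. Summing under the
integral gives `-e^{-r} ∫₀^y e^{-u} J₀(2√(r(y-u))) du`, and Bessel's integral
`π J₀(x) = ∫₀^π cos(x sin θ) dθ` shows `|J₀| ≤ 1`, so the integral is at most `∫₀^y e^{-u} du`.
-/

open Real Finset MeasureTheory intervalIntegral
open scoped Nat

noncomputable def besselJ0 (x : ℝ) : ℝ :=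
  ∑' n : ℕ, (-1) ^ n * (x / 2) ^ (2 * n) / (n ! : ℝ) ^ 2

theorem prod_range_odd_div_even (n : ℕ) :
    ∏ i ∈ range n, (2 * (i : ℝ) + 1) / (2 * i + 2) = (2 * n)! / (4 ^ n * (n ! : ℝ) ^ 2) := by
  induction n with
  | zero => simp
  | succ k ih =>
    rw [prod_range_succ, ih, show 2 * (k + 1) = 2 * k + 1 + 1 by ring]
    push_cast [Nat.factorial_succ]
    field_simp
    ring

theorem integral_sin_pow_even_eq_factorial (n : ℕ) :
    ∫ x in 0..π, sin x ^ (2 * n) = π * (2 * n)! / (4 ^ n * (n ! : ℝ) ^ 2) := by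
  rw [integral_sin_pow_even, prod_range_odd_div_even, mul_div_assoc]

theorem hasSum_besselJ0 (x : ℝ) :
    HasSum (fun n : ℕ => (-1) ^ n * (x / 2) ^ (2 * n) / (n ! : ℝ) ^ 2) (besselJ0 x) := by
  refine Summable.hasSum (.of_norm_bounded (Real.summable_pow_div_factorial ((x / 2) ^ 2)) ?_)
  intro n
  have h1 : (1 : ℝ) ≤ n ! := by exact_mod_cast n.factorial_pos
  rw [norm_div, norm_mul, norm_pow, norm_neg, norm_one, one_pow, one_mul, norm_pow, pow_mul,
    Real.norm_eq_abs, Real.norm_eq_abs, sq_abs, abs_of_nonneg (by positivity)]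
  gcongr
  nlinarith

theorem integral_cos_mul_sin_eq_pi_mul_besselJ0 (x : ℝ) :
    ∫ θ in 0..π, cos (x * sin θ) = π * besselJ0 x := by
  have hsum : Summable fun n : ℕ => |x| ^ (2 * n) / ((2 * n)! : ℝ) :=
    (Real.summable_pow_div_factorial |x|).comp_injective (mul_right_injective₀ two_ne_zero)
  have key := hasSum_integral_of_dominated_convergence (μ := volume) (a := 0) (b := π)
    (F := fun n θ => (-1) ^ n * (x * sin θ) ^ (2 * n) / ((2 * n)! : ℝ))
    (fun n _ => |x| ^ (2 * n) / ((2 * n)! : ℝ))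
    (fun n => by fun_prop)
    (fun n => .of_forall fun θ _ => by
      simp only [norm_div, norm_mul, norm_pow, norm_neg, norm_one, one_pow, one_mul,
        Real.norm_eq_abs, Nat.abs_cast]
      gcongr
      exact mul_le_of_le_one_right (abs_nonneg x) (abs_sin_le_one θ))
    (.of_forall fun _ _ => hsum) intervalIntegrable_const
    (.of_forall fun θ _ => Real.hasSum_cos (x * sin θ))
  have hterm (n : ℕ) : ∫ θ in 0..π, (-1) ^ n * (x * sin θ) ^ (2 * n) / ((2 * n)! : ℝ) =
      π * ((-1) ^ n * (x / 2) ^ (2 * n) / (n ! : ℝ) ^ 2) := by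
    simp_rw [mul_pow x, ← mul_assoc, mul_div_right_comm _ (sin _ ^ _)]
    rw [intervalIntegral.integral_const_mul, integral_sin_pow_even_eq_factorial]
    have : ((2 * n)! : ℝ) ≠ 0 := by positivity
    rw [div_pow, pow_mul 2, show (2 : ℝ) ^ 2 = 4 by norm_num]
    field_simp
  simp only [hterm] at key
  exact key.unique ((hasSum_besselJ0 x).mul_left π)

theorem abs_besselJ0_le_one (x : ℝ) : |besselJ0 x| ≤ 1 := by
  have h := norm_integral_le_of_norm_le_const (a := 0) (b := π) (C := 1)
    (f := fun θ => cos (x * sin θ)) fun θ _ => abs_cos_le_one _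
  rw [integral_cos_mul_sin_eq_pi_mul_besselJ0, norm_mul, Real.norm_of_nonneg pi_pos.le, sub_zero,
    abs_of_nonneg pi_pos.le, one_mul] at h
  exact le_of_mul_le_mul_left (by simpa using h) pi_pos

theorem integral_sub_pow_succ_mul_exp_neg (y : ℝ) (l : ℕ) :
    ∫ u in 0..y, (y - u) ^ (l + 1) * exp (-u) =
      y ^ (l + 1) - (l + 1) * ∫ u in 0..y, (y - u) ^ l * exp (-u) := by
  have hu (t : ℝ) : HasDerivAt (fun u => (y - u) ^ (l + 1)) (-((l + 1) * (y - t) ^ l)) t := by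
    simpa using ((hasDerivAt_id t).const_sub y).fun_pow (l + 1)
  have hv (t : ℝ) : HasDerivAt (fun u => -exp (-u)) (exp (-t)) t := by
    simpa using (hasDerivAt_neg t).exp.fun_neg
  rw [integral_mul_deriv_eq_deriv_mul (fun t _ => hu t) (fun t _ => hv t)
    (by apply Continuous.intervalIntegrable; fun_prop)
    (by apply Continuous.intervalIntegrable; fun_prop)]
  simp_rw [neg_mul_neg, mul_assoc]
  rw [intervalIntegral.integral_const_mul]
  simp

theorem exp_neg_sub_sum_range_eq_integral (y : ℝ) (l : ℕ) :
    exp (-y) - ∑ k ∈ range (l + 1), (-y) ^ k / k ! =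
      (-1) ^ (l + 1) / l ! * ∫ u in 0..y, (y - u) ^ l * exp (-u) := by
  induction l with
  | zero => simp
  | succ l ih =>
    rw [sum_range_succ, ← sub_sub, ih, integral_sub_pow_succ_mul_exp_neg, Nat.factorial_succ]
    push_cast
    field_simp
    ring

theorem tsum_mul_sum_range_eq_tsum_tail_mul {R : Type*} [NormedRing R] [CompleteSpace R]
    {a b : ℕ → R} (ha : Summable (‖a ·‖)) (hb : Summable (‖b ·‖)) :
    ∑' j, a j * ∑ l ∈ range j, b l = ∑' l, (∑' j, a j - ∑ j ∈ range (l + 1), a j) * b l := by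
  set f : ℕ → ℕ → R := fun j l => if l < j then a j * b l else 0 with hf_def
  have hf : Summable (Function.uncurry f) := by
    refine .of_norm_bounded (ha.mul_norm hb) fun ⟨j, l⟩ => ?_
    simp only [Function.uncurry_apply_pair, hf_def]
    split_ifs <;> simp
  have hrow (j : ℕ) : ∑' l, f j l = a j * ∑ l ∈ range j, b l := by
    rw [tsum_eq_sum (s := range j) fun l hl => if_neg (by simpa using hl), mul_sum]
    exact sum_congr rfl fun l hl => if_pos (mem_range.1 hl)
  have hcol (l : ℕ) : ∑' j, f j l = (∑' j, a j - ∑ j ∈ range (l + 1), a j) * b l := by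
    have hfl : Summable fun j => f j l :=
      (hf.comp_injective Prod.swap_injective).prod_factor l
    rw [← hfl.sum_add_tsum_nat_add (l + 1), ← (ha.of_norm.sum_add_tsum_nat_add (l + 1)),
      add_sub_cancel_left,
      ← ((summable_nat_add_iff (l + 1)).2 ha.of_norm).tsum_mul_right,
      sum_eq_zero fun j hj => if_neg (by simpa [Nat.lt_succ_iff] using hj)]
    simp only [zero_add, hf_def]
    exact tsum_congr fun i => if_pos (by omega)
  simp_rw [← hrow, ← hcol]
  exact (hf.tsum_comm' hf.prod_factor fun l =>
    (hf.comp_injective Prod.swap_injective).prod_factor l).symm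

theorem hasSum_besselJ0_two_mul_sqrt {z : ℝ} (hz : 0 ≤ z) :
    HasSum (fun n : ℕ => (-z) ^ n / (n ! : ℝ) ^ 2) (besselJ0 (2 * √z)) := by
  convert hasSum_besselJ0 (2 * √z) using 2 with n
  rw [mul_div_cancel_left₀ _ two_ne_zero, pow_mul, sq_sqrt hz, neg_pow]

theorem hasSum_integral_sub_pow_mul_exp_neg {y r : ℝ} (hy : 0 ≤ y) (hr : 0 ≤ r) :
    HasSum (fun l : ℕ => (-r) ^ l / (l ! : ℝ) ^ 2 * ∫ u in 0..y, (y - u) ^ l * exp (-u))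
      (∫ u in 0..y, exp (-u) * besselJ0 (2 * √(r * (y - u)))) := by
  have hbound (l : ℕ) (u : ℝ) (hu : u ∈ Set.Ioc 0 y) :
      ‖(-r) ^ l / (l ! : ℝ) ^ 2 * ((y - u) ^ l * exp (-u))‖ ≤ (r * y) ^ l / l ! := by
    have hfact : (l ! : ℝ) ≤ (l ! : ℝ) ^ 2 := by
      have : (1 : ℝ) ≤ l ! := by exact_mod_cast l.factorial_pos
      nlinarith
    have hyu : 0 ≤ y - u := sub_nonneg.2 hu.2
    rw [norm_mul, norm_div, norm_mul, norm_pow, norm_pow, norm_pow, norm_neg,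
      Real.norm_of_nonneg hr, Real.norm_of_nonneg (by positivity), Real.norm_of_nonneg hyu,
      Real.norm_of_nonneg (exp_pos _).le, mul_pow]
    calc r ^ l / (l ! : ℝ) ^ 2 * ((y - u) ^ l * exp (-u))
        ≤ r ^ l / (l ! : ℝ) * (y ^ l * 1) := by
          gcongr
          · linarith [hu.1]
          · exact exp_le_one_iff.2 (by linarith [hu.1])
      _ = r ^ l * y ^ l / l ! := by ring
  have key := hasSum_integral_of_dominated_convergence (μ := volume) (a := 0) (b := y)
    (F := fun l u => (-r) ^ l / (l ! : ℝ) ^ 2 * ((y - u) ^ l * exp (-u)))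
    (fun l _ => (r * y) ^ l / l !) (fun l => by fun_prop)
    (fun l => .of_forall fun u hu => hbound l u (by rwa [Set.uIoc_of_le hy] at hu))
    (.of_forall fun _ _ => Real.summable_pow_div_factorial (r * y)) intervalIntegrable_const
    (.of_forall fun u hu => by
      rw [Set.uIoc_of_le hy] at hu
      have hterm (l : ℕ) : exp (-u) * ((-(r * (y - u))) ^ l / (l ! : ℝ) ^ 2) =
          (-r) ^ l / (l ! : ℝ) ^ 2 * ((y - u) ^ l * exp (-u)) := by
        rw [← neg_mul, mul_pow]
        ring
      simpa only [hterm] using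
        (hasSum_besselJ0_two_mul_sqrt (mul_nonneg hr (sub_nonneg.2 hu.2))).mul_left (exp (-u)))
  simpa only [intervalIntegral.integral_const_mul] using key

theorem abs_integral_exp_neg_mul_le {y : ℝ} (hy : 0 ≤ y) {g : ℝ → ℝ} (hg : ∀ u, |g u| ≤ 1) :
    |∫ u in 0..y, exp (-u) * g u| ≤ 1 - exp (-y) :=
  calc |∫ u in 0..y, exp (-u) * g u| ≤ ∫ u in 0..y, exp (-u) := by
        refine intervalIntegral.norm_integral_le_of_norm_le (f := fun u => exp (-u) * g u) hy
          (.of_forall fun u _ => ?_) (Continuous.intervalIntegrable ?_ _ _)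
        · rw [norm_mul, Real.norm_of_nonneg (exp_pos _).le]
          exact mul_le_of_le_one_right (exp_pos _).le (hg u)
        · fun_prop
    _ = 1 - exp (-y) := by simp

theorem stmt_13 (y r : ℝ) (hy : 0 ≤ y) (hr : 0 ≤ r) :
    |∑' j : ℕ, (-y) ^ j / (j.factorial : ℝ) *
        (Real.exp (-r) * ∑ l ∈ Finset.range j, r ^ l / (l.factorial : ℝ))| ≤
      Real.exp (-r) * (1 - Real.exp (-y)) := by
  have hexp : ∑' j : ℕ, (-y) ^ j / j ! = exp (-y) := by
    rw [Real.exp_eq_exp_ℝ, NormedSpace.exp_eq_tsum_div]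
  have hS : ∑' j : ℕ, (-y) ^ j / j ! * ∑ l ∈ range j, r ^ l / l ! =
      -∫ u in 0..y, exp (-u) * besselJ0 (2 * √(r * (y - u))) := by
    rw [tsum_mul_sum_range_eq_tsum_tail_mul (a := fun j => (-y) ^ j / j !)
      (b := fun l => r ^ l / l !) (summable_norm_iff.2 (Real.summable_pow_div_factorial _))
      (summable_norm_iff.2 (Real.summable_pow_div_factorial _)), hexp,
      ← (hasSum_integral_sub_pow_mul_exp_neg hy hr).tsum_eq, ← tsum_neg]
    refine tsum_congr fun l => ?_
    have : (l ! : ℝ) ≠ 0 := by positivity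
    rw [exp_neg_sub_sum_range_eq_integral, neg_pow r]
    field_simp
    ring
  simp_rw [mul_left_comm _ (exp (-r)) (∑ _ ∈ _, _)]
  rw [tsum_mul_left, abs_mul, abs_of_pos (exp_pos _), hS, abs_neg]
  gcongr
  exact abs_integral_exp_neg_mul_le hy fun _ => abs_besselJ0_le_one _
end

section
/- Let N be a Poisson random variable with mean np, where n ≥ 1 is an integer and p ∈ (0,1], and let h(x) = -x·log x. Then |E[h(N/n)] - h(p)| ≤ 1/n. -/
/-! With `π_k = e^{-L} L^k / k!` and `L = n p`, the identity `k π_k = L π_{k-1}` turns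
`E[h(N/n)]` into `h(p) - p · E[log((N+1)/L)]`. Evaluating `1 - 1/x ≤ log x ≤ x - 1` at
`x = (N+1)/L` gives `0 ≤ e^{-L} = E[1 - L/(N+1)] ≤ E[log((N+1)/L)] ≤ E[(N+1)/L - 1] = 1/L`,
and `p / L = 1/n`. -/

open Real Finset
open scoped Nat

noncomputable def poissonWeight (L : ℝ) (k : ℕ) : ℝ := exp (-L) * L ^ k / k !

section

variable {L : ℝ}

lemma poissonWeight_nonneg (hL : 0 ≤ L) (k : ℕ) : 0 ≤ poissonWeight L k := by
  unfold poissonWeight; positivity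

lemma hasSum_poissonWeight (L : ℝ) : HasSum (poissonWeight L) 1 := by
  have := (NormedSpace.expSeries_div_hasSum_exp L).mul_left (exp (-L))
  rw [← exp_eq_exp_ℝ, ← exp_add, neg_add_cancel, exp_zero] at this
  show HasSum (fun k ↦ exp (-L) * L ^ k / k !) 1
  simpa only [mul_div_assoc] using this

lemma poissonWeight_succ (L : ℝ) (k : ℕ) :
    poissonWeight L (k + 1) = L / (k + 1) * poissonWeight L k := by
  simp only [poissonWeight, Nat.factorial_succ, pow_succ]
  push_cast
  field_simp

lemma hasSum_poissonWeight_mul_natCast_mul_iff {g : ℕ → ℝ} {a : ℝ} :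
    HasSum (fun k ↦ poissonWeight L k * (k * g k)) a ↔
      HasSum (fun k ↦ L * (poissonWeight L k * g (k + 1))) a := by
  rw [← hasSum_nat_add_iff' 1]
  simp only [range_one, sum_singleton, CharP.cast_eq_zero, zero_mul, mul_zero, sub_zero]
  refine iff_of_eq (congrArg (HasSum · a) (funext fun k ↦ ?_))
  rw [poissonWeight_succ]
  push_cast
  field_simp

lemma hasSum_poissonWeight_mul_natCast (L : ℝ) : HasSum (fun k ↦ poissonWeight L k * k) L := by
  have := hasSum_poissonWeight_mul_natCast_mul_iff (g := fun _ ↦ 1) |>.mpr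
    (by simpa using (hasSum_poissonWeight L).mul_left L)
  simpa using this

lemma hasSum_poissonWeight_mul_one_sub_div (L : ℝ) :
    HasSum (fun k ↦ poissonWeight L k * (1 - L / (k + 1))) (poissonWeight L 0) := by
  have hshift : HasSum (fun k ↦ L / (k + 1) * poissonWeight L k) (1 - poissonWeight L 0) := by
    simp_rw [← poissonWeight_succ]
    simpa using (hasSum_nat_add_iff' 1).mpr (hasSum_poissonWeight L)
  refine (congrArg₂ HasSum (funext fun k ↦ ?_) ?_).mp ((hasSum_poissonWeight L).sub hshift)
  <;> ring

lemma hasSum_poissonWeight_mul_succ_div_sub_one (hL : L ≠ 0) :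
    HasSum (fun k ↦ poissonWeight L k * ((k + 1) / L - 1)) (1 / L) := by
  have := (((hasSum_poissonWeight_mul_natCast L).add (hasSum_poissonWeight L)).div_const L).sub
    (hasSum_poissonWeight L)
  refine (congrArg₂ HasSum (funext fun k ↦ ?_) ?_).mp this
  · ring
  · field_simp
    ring

lemma poissonWeight_mul_one_sub_div_le_mul_log (hL : 0 < L) (k : ℕ) :
    poissonWeight L k * (1 - L / (k + 1)) ≤ poissonWeight L k * log ((k + 1) / L) := by
  have h := one_sub_inv_le_log_of_pos (x := (k + 1) / L) (by positivity)
  rw [inv_div] at h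
  exact mul_le_mul_of_nonneg_left h (poissonWeight_nonneg hL.le k)

lemma poissonWeight_mul_log_le_mul_sub_one (hL : 0 < L) (k : ℕ) :
    poissonWeight L k * log ((k + 1) / L) ≤ poissonWeight L k * ((k + 1) / L - 1) :=
  mul_le_mul_of_nonneg_left (log_le_sub_one_of_pos (by positivity)) (poissonWeight_nonneg hL.le k)

lemma summable_poissonWeight_mul_log_succ_div (hL : 0 < L) :
    Summable (fun k : ℕ ↦ poissonWeight L k * log ((k + 1) / L)) := by
  have hlo := (hasSum_poissonWeight_mul_one_sub_div L).summable
  have hgap : Summable (fun k : ℕ ↦ poissonWeight L k * log ((k + 1) / L) -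
      poissonWeight L k * (1 - L / (k + 1))) :=
    .of_nonneg_of_le (fun k ↦ sub_nonneg.mpr (poissonWeight_mul_one_sub_div_le_mul_log hL k))
      (fun k ↦ sub_le_sub_right (poissonWeight_mul_log_le_mul_sub_one hL k) _)
      ((hasSum_poissonWeight_mul_succ_div_sub_one hL.ne').summable.sub hlo)
  simpa using hgap.add hlo

lemma tsum_poissonWeight_mul_log_succ_div_nonneg (hL : 0 < L) :
    0 ≤ ∑' k : ℕ, poissonWeight L k * log ((k + 1) / L) :=
  (poissonWeight_nonneg hL.le 0).trans <|
    hasSum_le (poissonWeight_mul_one_sub_div_le_mul_log hL)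
      (hasSum_poissonWeight_mul_one_sub_div L) (summable_poissonWeight_mul_log_succ_div hL).hasSum

lemma tsum_poissonWeight_mul_log_succ_div_le (hL : 0 < L) :
    ∑' k : ℕ, poissonWeight L k * log ((k + 1) / L) ≤ 1 / L :=
  hasSum_le (poissonWeight_mul_log_le_mul_sub_one hL)
    (summable_poissonWeight_mul_log_succ_div hL).hasSum
    (hasSum_poissonWeight_mul_succ_div_sub_one hL.ne')

end

theorem hasSum_poissonWeight_mul_negMulLog {c p D : ℝ} (hc : 0 < c) (hp : 0 < p)
    (hD : HasSum (fun k : ℕ ↦ poissonWeight (c * p) k * log ((k + 1) / (c * p))) D) :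
    HasSum (fun k : ℕ ↦ poissonWeight (c * p) k * negMulLog (k / c)) (negMulLog p - p * D) := by
  have hnegMulLog (k : ℕ) : negMulLog (k / c) = k * (-log (k / c) / c) := by
    rw [negMulLog]; ring
  simp_rw [hnegMulLog, hasSum_poissonWeight_mul_natCast_mul_iff]
  have hlog (k : ℕ) : log (((k + 1 : ℕ) : ℝ) / c) = log ((k + 1) / (c * p)) + log p := by
    rw [← log_mul (by positivity) hp.ne']
    push_cast
    field_simp
  refine (congrArg₂ HasSum (funext fun k ↦ ?_) ?_).mp
    ((hD.add ((hasSum_poissonWeight (c * p)).mul_right (log p))).mul_left (-p))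
  · rw [hlog]
    field_simp
  · rw [negMulLog]
    ring

theorem stmt_14 (n : ℕ) (hn : 1 ≤ n) (p : ℝ) (hp : p ∈ Set.Ioc (0 : ℝ) 1) :
    |(∑' j : ℕ, Real.exp (-(n * p)) * (n * p) ^ j / (j.factorial : ℝ) *
          (-((j : ℝ) / n) * Real.log ((j : ℝ) / n))) -
        (-p * Real.log p)| ≤ 1 / n := by
  change |(∑' j : ℕ, poissonWeight (n * p) j * negMulLog (j / n)) - negMulLog p| ≤ 1 / n
  have hn₀ : (0 : ℝ) < n := by exact_mod_cast hn
  have hp₀ : 0 < p := hp.1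
  have hL : 0 < n * p := mul_pos hn₀ hp₀
  set D := ∑' k : ℕ, poissonWeight (n * p) k * log ((k + 1) / (n * p))
  rw [(hasSum_poissonWeight_mul_negMulLog hn₀ hp₀
    (summable_poissonWeight_mul_log_succ_div hL).hasSum).tsum_eq, sub_sub_cancel_left, abs_neg,
    abs_of_nonneg (mul_nonneg hp₀.le (tsum_poissonWeight_mul_log_succ_div_nonneg hL))]
  calc p * D ≤ p * (1 / (n * p)) :=
        mul_le_mul_of_nonneg_left (tsum_poissonWeight_mul_log_succ_div_le hL) hp₀.le
    _ = 1 / n := by field_simp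
end

section
/- Let h(x) = -x·log x and for n ≥ 2 define h_n(x) = n·(h(((n-1)/n)x + 1/n) - h(((n-1)/n)x)). Then for all x ∈ [0, 1 - 1/(n-1)], |B_{n-1}(h_n, x) - h_n(x)| ≤ 1. -/
/-- `h(x) = -x log x`. -/
noncomputable def hFun (x : ℝ) : ℝ := -x * Real.log x

/-- `h_n(x) = n (h(((n-1)/n)x + 1/n) - h(((n-1)/n)x))`. -/
noncomputable def hFunN (n : ℕ) (x : ℝ) : ℝ :=
  n * (hFun ((((n : ℝ) - 1) / n) * x + 1 / n) - hFun ((((n : ℝ) - 1) / n) * x))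

open Finset Polynomial

lemma tangent_ineq {u c : ℝ} (hu : 0 ≤ u) (hc : 0 < c) :
    u * Real.log c + (u - c) ≤ u * Real.log u := by
  rcases eq_or_lt_of_le hu with h | h
  · simp [← h]; linarith
  · have hl := Real.log_le_sub_one_of_pos (div_pos hc h)
    rw [Real.log_div hc.ne' h.ne'] at hl
    have h2 : u * (Real.log c - Real.log u) ≤ u * (c / u - 1) :=
      mul_le_mul_of_nonneg_left hl hu
    have h3 : u * (c / u - 1) = c - u := by field_simp
    nlinarith [h2]

lemma chord_ineq {u c : ℝ} (hu : 0 ≤ u) (hc : 0 < c) :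
    u * Real.log u ≤ u * Real.log c + (u^2 - u*c)/c := by
  rcases eq_or_lt_of_le hu with h | h
  · simp [← h]
  · have hl := Real.log_le_sub_one_of_pos (div_pos h hc)
    rw [Real.log_div h.ne' hc.ne'] at hl
    have h2 : u * (Real.log u - Real.log c) ≤ u * (u / c - 1) :=
      mul_le_mul_of_nonneg_left hl hu
    have h3 : u * (u / c - 1) = (u^2 - u*c)/c := by field_simp
    nlinarith [h2]

lemma jensen_gap (N : ℕ) (w t : ℕ → ℝ) (c V : ℝ)
    (hw : ∀ j ∈ Finset.range N, 0 ≤ w j) (ht : ∀ j ∈ Finset.range N, 0 ≤ t j)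
    (h0 : ∑ j ∈ Finset.range N, w j = 1)
    (h1 : ∑ j ∈ Finset.range N, w j * t j = c)
    (h2 : ∑ j ∈ Finset.range N, w j * (t j)^2 = c^2 + V)
    (hc : 0 < c) :
    c * Real.log c ≤ (∑ j ∈ Finset.range N, w j * (t j * Real.log (t j))) ∧
    (∑ j ∈ Finset.range N, w j * (t j * Real.log (t j))) ≤ c * Real.log c + V / c := by
  constructor
  · have key : ∀ j ∈ Finset.range N,
        Real.log c * (w j * t j) + (w j * t j) - c * w j ≤ w j * (t j * Real.log (t j)) := by
      intro j hj
      have := mul_le_mul_of_nonneg_left (tangent_ineq (ht j hj) hc) (hw j hj)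
      nlinarith [this]
    have hsum := Finset.sum_le_sum key
    have expand : ∑ j ∈ Finset.range N,
        (Real.log c * (w j * t j) + (w j * t j) - c * w j)
        = Real.log c * (∑ j ∈ Finset.range N, w j * t j)
          + (∑ j ∈ Finset.range N, w j * t j) - c * (∑ j ∈ Finset.range N, w j) := by
      rw [Finset.mul_sum, Finset.mul_sum, ← Finset.sum_add_distrib, ← Finset.sum_sub_distrib]
    rw [expand, h0, h1] at hsum
    nlinarith [hsum]
  · have key : ∀ j ∈ Finset.range N,
        w j * (t j * Real.log (t j)) ≤
        Real.log c * (w j * t j) + (1/c) * (w j * (t j)^2) - (w j * t j) := by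
      intro j hj
      have h4 := mul_le_mul_of_nonneg_left (chord_ineq (ht j hj) hc) (hw j hj)
      have h5 : w j * (t j * Real.log c + ((t j)^2 - t j * c)/c)
          = Real.log c * (w j * t j) + (1/c) * (w j * (t j)^2) - (w j * t j) := by
        field_simp
        ring
      linarith [h4, h5.symm.le, h5.le]
    have hsum := Finset.sum_le_sum key
    have expand : ∑ j ∈ Finset.range N,
        (Real.log c * (w j * t j) + (1/c) * (w j * (t j)^2) - (w j * t j))
        = Real.log c * (∑ j ∈ Finset.range N, w j * t j)
          + (1/c) * (∑ j ∈ Finset.range N, w j * (t j)^2)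
          - (∑ j ∈ Finset.range N, w j * t j) := by
      rw [Finset.mul_sum, Finset.mul_sum, ← Finset.sum_add_distrib, ← Finset.sum_sub_distrib]
    rw [expand, h1, h2] at hsum
    have : (1/c) * (c^2 + V) = c + V/c := by field_simp
    nlinarith [hsum]

lemma bern_sum (m : ℕ) (x : ℝ) :
    ∑ j ∈ range (m+1), (m.choose j : ℝ) * x^j * (1-x)^(m-j) = 1 := by
  have h := congrArg (Polynomial.eval x) (bernsteinPolynomial.sum ℝ m)
  simpa [bernsteinPolynomial, Polynomial.eval_finset_sum, mul_assoc] using h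

lemma bern_sum_smul (m : ℕ) (x : ℝ) :
    ∑ j ∈ range (m+1), (j:ℝ) * ((m.choose j : ℝ) * x^j * (1-x)^(m-j)) = m * x := by
  have h := congrArg (Polynomial.eval x) (bernsteinPolynomial.sum_smul ℝ m)
  simpa [bernsteinPolynomial, Polynomial.eval_finset_sum, mul_assoc] using h

lemma bern_sum_sq (m : ℕ) (x : ℝ) :
    ∑ j ∈ range (m+1), (j:ℝ)^2 * ((m.choose j : ℝ) * x^j * (1-x)^(m-j))
      = (m*(m-1):ℕ) * x^2 + m * x := by
  have h := congrArg (Polynomial.eval x) (bernsteinPolynomial.sum_mul_smul ℝ m)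
  have h2 : ∑ j ∈ range (m+1), ((j*(j-1):ℕ):ℝ) * ((m.choose j : ℝ) * x^j * (1-x)^(m-j))
      = (m*(m-1):ℕ) * x^2 := by
    simpa [bernsteinPolynomial, Polynomial.eval_finset_sum, mul_assoc] using h
  have h3 : ∀ j : ℕ, ((j*(j-1):ℕ):ℝ) = (j:ℝ)^2 - (j:ℝ) := by
    intro j
    cases j with
    | zero => simp
    | succ k => push_cast [Nat.succ_sub_one]; ring
  have h4 : ∑ j ∈ range (m+1), (j:ℝ)^2 * ((m.choose j : ℝ) * x^j * (1-x)^(m-j))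
      = ∑ j ∈ range (m+1), (((j*(j-1):ℕ):ℝ) * ((m.choose j : ℝ) * x^j * (1-x)^(m-j))
          + (j:ℝ) * ((m.choose j : ℝ) * x^j * (1-x)^(m-j))) := by
    apply Finset.sum_congr rfl
    intro j _
    rw [h3 j]; ring
  rw [h4, Finset.sum_add_distrib, h2, bern_sum_smul]

set_option maxHeartbeats 1000000 in
theorem stmt_17 (n : ℕ) (hn : 2 ≤ n) (x : ℝ)
    (hx : x ∈ Set.Icc (0 : ℝ) (1 - 1 / ((n : ℝ) - 1))) :
    |(∑ j ∈ Finset.range n,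
          hFunN n ((j : ℝ) / ((n : ℝ) - 1)) * ((n - 1).choose j : ℝ) * x ^ j *
            (1 - x) ^ (n - 1 - j)) -
        hFunN n x| ≤ 1 := by
  obtain ⟨hx0, hx1⟩ := hx
  have hn2 : (2:ℝ) ≤ (n:ℝ) := by exact_mod_cast hn
  have hnm1 : (1:ℝ) ≤ (n:ℝ) - 1 := by linarith
  have hnpos : (0:ℝ) < n := by linarith
  have hne : (n:ℝ) ≠ 0 := ne_of_gt hnpos
  have hne1 : ((n:ℝ) - 1) ≠ 0 := by intro h; linarith
  have hxle1 : x ≤ 1 := by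
    have : 0 < 1 / ((n:ℝ) - 1) := by positivity
    linarith
  rcases eq_or_lt_of_le hx0 with hx0' | hx0'
  · -- x = 0 : the sum collapses to the j = 0 term
    rw [← hx0']
    rw [Finset.sum_eq_single 0]
    · simp
    · intro j _ hj0
      simp [zero_pow hj0]
    · intro h
      exact absurd (Finset.mem_range.mpr (by omega)) h
  -- x > 0 from here on
  set m : ℕ := n - 1 with hm
  have hmr : ((m:ℕ):ℝ) = (n:ℝ) - 1 := by
    rw [hm, Nat.cast_sub (by omega : 1 ≤ n)]
    norm_num
  have hrange : n = m + 1 := by omega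
  set w : ℕ → ℝ := fun j => (m.choose j : ℝ) * x^j * (1-x)^(m-j) with hw
  have hwnn : ∀ j ∈ Finset.range (m+1), 0 ≤ w j := by
    intro j _
    have h1x : (0:ℝ) ≤ 1 - x := by linarith
    have h0x : (0:ℝ) ≤ x := hx0
    rw [hw]
    positivity
  set A : ℝ := (((n : ℝ) - 1) / n) * x with hA
  set V : ℝ := ((n:ℝ) - 1) * x * (1 - x) / (n:ℝ)^2 with hV
  have harg : ∀ j : ℕ, (((n : ℝ) - 1) / n) * ((j : ℝ) / ((n : ℝ) - 1)) = (j:ℝ)/n := by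
    intro j
    field_simp
  have sum_eq : (∑ j ∈ Finset.range n,
          hFunN n ((j : ℝ) / ((n : ℝ) - 1)) * ((n - 1).choose j : ℝ) * x ^ j *
            (1 - x) ^ (n - 1 - j))
      = (n:ℝ) * ((∑ j ∈ Finset.range (m+1), w j * ((j:ℝ)/n * Real.log ((j:ℝ)/n)))
          - (∑ j ∈ Finset.range (m+1), w j * (((j:ℝ)/n + 1/n) * Real.log ((j:ℝ)/n + 1/n)))) := by
    have hr2 : Finset.range n = Finset.range (m+1) := by rw [hrange]
    rw [hr2, ← Finset.sum_sub_distrib, Finset.mul_sum]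
    apply Finset.sum_congr rfl
    intro j _
    simp only [hFunN, hFun, harg j, hw]
    ring
  have hFunN_x : hFunN n x
      = (n:ℝ) * (A * Real.log A - (A + 1/n) * Real.log (A + 1/n)) := by
    simp only [hFunN, hFun, ← hA]
    ring
  have M0 : ∑ j ∈ Finset.range (m+1), w j = 1 := bern_sum m x
  have M1 : ∑ j ∈ Finset.range (m+1), w j * ((j:ℝ)/n) = A := by
    have e : ∀ j ∈ Finset.range (m+1), w j * ((j:ℝ)/n) = (1/(n:ℝ)) * ((j:ℝ) * w j) := by
      intro j _; ring
    rw [Finset.sum_congr rfl e, ← Finset.mul_sum, bern_sum_smul, hmr, hA]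
    field_simp
  have M2 : ∑ j ∈ Finset.range (m+1), w j * ((j:ℝ)/n)^2 = A^2 + V := by
    have e : ∀ j ∈ Finset.range (m+1), w j * ((j:ℝ)/n)^2 = (1/(n:ℝ)^2) * ((j:ℝ)^2 * w j) := by
      intro j _; ring
    rw [Finset.sum_congr rfl e, ← Finset.mul_sum, bern_sum_sq]
    have hm1 : 1 ≤ m := by omega
    have hmm : ((m*(m-1):ℕ):ℝ) = ((m:ℕ):ℝ) * (((m:ℕ):ℝ) - 1) := by
      push_cast [Nat.cast_sub hm1]
      ring
    rw [hmm, hmr, hA, hV]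
    field_simp
    ring
  have M1' : ∑ j ∈ Finset.range (m+1), w j * ((j:ℝ)/n + 1/n) = A + 1/n := by
    have e : ∀ j ∈ Finset.range (m+1),
        w j * ((j:ℝ)/n + 1/n) = w j * ((j:ℝ)/n) + (1/(n:ℝ)) * w j := by
      intro j _; ring
    rw [Finset.sum_congr rfl e, Finset.sum_add_distrib, M1, ← Finset.mul_sum, M0, mul_one]
  have M2' : ∑ j ∈ Finset.range (m+1), w j * ((j:ℝ)/n + 1/n)^2 = (A + 1/n)^2 + V := by
    have e : ∀ j ∈ Finset.range (m+1),
        w j * ((j:ℝ)/n + 1/n)^2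
          = w j * ((j:ℝ)/n)^2 + (2/(n:ℝ)) * (w j * ((j:ℝ)/n)) + (1/(n:ℝ)^2) * w j := by
      intro j _; ring
    rw [Finset.sum_congr rfl e, Finset.sum_add_distrib, Finset.sum_add_distrib, M2,
      ← Finset.mul_sum, M1, ← Finset.mul_sum, M0]
    ring
  have hApos : 0 < A := by
    rw [hA]
    positivity
  have h1n : (0:ℝ) < 1/n := by positivity
  have hBpos : 0 < A + 1/n := by linarith
  have hVnn : 0 ≤ V := by
    rw [hV]
    have h1x : (0:ℝ) ≤ 1 - x := by linarith
    positivity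
  have htnn : ∀ j ∈ Finset.range (m+1), 0 ≤ (j:ℝ)/n := by
    intro j _; positivity
  have htnn' : ∀ j ∈ Finset.range (m+1), 0 ≤ (j:ℝ)/n + 1/n := by
    intro j _; positivity
  obtain ⟨P1, P2⟩ := jensen_gap (m+1) w (fun j => (j:ℝ)/n) A V hwnn htnn M0 M1 M2 hApos
  obtain ⟨Q1, Q2⟩ := jensen_gap (m+1) w (fun j => (j:ℝ)/n + 1/n) (A + 1/n) V hwnn htnn'
    M0 M1' M2' hBpos
  rw [sum_eq, hFunN_x]
  set S1 : ℝ := ∑ j ∈ Finset.range (m+1), w j * ((j:ℝ)/n * Real.log ((j:ℝ)/n)) with hS1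
  set S2 : ℝ := ∑ j ∈ Finset.range (m+1),
      w j * (((j:ℝ)/n + 1/n) * Real.log ((j:ℝ)/n + 1/n)) with hS2
  -- the two scale bounds
  have keyA : (n:ℝ) * (V / A) = 1 - x := by
    rw [hV, hA]
    field_simp
  have keyB : (n:ℝ) * (V / (A + 1/n)) ≤ 1 := by
    rw [mul_div_assoc', div_le_one hBpos, hV, hA]
    have e1 : (n:ℝ) * (((n:ℝ) - 1) * x * (1 - x) / (n:ℝ) ^ 2) = ((n:ℝ)-1)*x*(1-x) / n := by
      field_simp
    have e2 : ((n:ℝ) - 1) / (n:ℝ) * x + 1 / (n:ℝ) = (((n:ℝ)-1)*x + 1) / n := by ring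
    rw [e1, e2, div_le_div_iff₀ hnpos hnpos]
    have hx2 : (0:ℝ) ≤ ((n:ℝ) - 1) * x^2 := by nlinarith
    nlinarith [mul_nonneg hnpos.le hx2, hnpos]
  have hp1 : 0 ≤ (n:ℝ) * (S1 - A * Real.log A) :=
    mul_nonneg hnpos.le (by linarith)
  have hp2 : (n:ℝ) * (S1 - A * Real.log A) ≤ (n:ℝ) * (V / A) :=
    mul_le_mul_of_nonneg_left (by linarith) hnpos.le
  have hq1 : 0 ≤ (n:ℝ) * (S2 - (A + 1/n) * Real.log (A + 1/n)) :=
    mul_nonneg hnpos.le (by linarith)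
  have hq2 : (n:ℝ) * (S2 - (A + 1/n) * Real.log (A + 1/n)) ≤ (n:ℝ) * (V / (A + 1/n)) :=
    mul_le_mul_of_nonneg_left (by linarith) hnpos.le
  have hre : (n:ℝ) * (S1 - S2)
      - (n:ℝ) * (A * Real.log A - (A + 1/n) * Real.log (A + 1/n))
      = (n:ℝ) * (S1 - A * Real.log A)
        - (n:ℝ) * (S2 - (A + 1/n) * Real.log (A + 1/n)) := by ring
  rw [abs_le, hre]
  constructor
  · linarith
  · linarith [keyA, hx0'.le]
end
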